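/- arXiv:1707.04874 — 9 statements merged into one kernel-verified Lean document; each statement's English description precedes it below -/
import Mathlib

section
/- Let G be a finite simple graph with a perfect matching M such that (i) no edge of M lies in a triangle of G, and (ii) whenever an edge of M is the central edge of a path of length 3 in G, the two endpoints of that path are adjacent in G. Then every maximal independent set of G has cardinality |V(G)|/2. -/
/-- `M` is a perfect matching of `G`, viewed as a set of edges: every edge of `M` is an
edge of `G`, and every vertex belongs to exactly one edge of `M`. -/
def IsPerfectMatchingEdges {V : Type*} (G : SimpleGraph V) (M : Set (Sym2 V)) : Prop :=
  M ⊆ G.edgeSet ∧ ∀ v : V, ∃! e, e ∈ M ∧ v ∈ e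

/-- `s` is an independent set of `G`. -/
def IsIndepSet' {V : Type*} (G : SimpleGraph V) (s : Set V) : Prop :=
  s.Pairwise fun a b => ¬ G.Adj a b

/-!
The matching partner `v ↦ v'` is an involution. For a maximal independent set `s`, a vertex
`a ∉ s` has a neighbour `z ∈ s`; if also `a' ∉ s`, then `a'` has a neighbour `w ∈ s`. By (i)
`z ≠ w`, so `z a a' w` is a path of length 3 with central edge `aa'`, and (ii) makes `z, w ∈ s`
adjacent — impossible. Hence the partner map sends `s` bijectively onto its complement, and
`|s| = |V|/2`.
-/

theorem Maximal.exists_adj_mem_of_isIndepSet' {V : Type*} {G : SimpleGraph V} {s : Set V}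
    (hs : Maximal (IsIndepSet' G) s) {v : V} (hv : v ∉ s) : ∃ z ∈ s, G.Adj v z := by
  by_contra! hno
  have : IsIndepSet' G (insert v s) :=
    Set.pairwise_insert.mpr ⟨hs.1, fun z hz _ => ⟨hno z hz, fun h => hno z hz h.symm⟩⟩
  exact hv (hs.2 this (Set.subset_insert v s) (Set.mem_insert v s))

theorem Set.ncard_eq_card_div_two_of_image_eq_compl {α : Type*} [Finite α] {f : α → α}
    (hf : Function.Injective f) {s : Set α} (h : f '' s = sᶜ) :
    s.ncard = Nat.card α / 2 := by
  have hcompl : sᶜ.ncard = s.ncard := by rw [← h, Set.ncard_image_of_injective _ hf]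
  have htotal := Set.ncard_add_ncard_compl s
  omega

namespace IsPerfectMatchingEdges

variable {V : Type*} {G : SimpleGraph V} {M : Set (Sym2 V)}

theorem exists_mk_mem (hM : IsPerfectMatchingEdges G M) (v : V) : ∃ w, s(v, w) ∈ M := by
  obtain ⟨e, ⟨heM, hve⟩, -⟩ := hM.2 v
  obtain ⟨w, rfl⟩ := Sym2.mem_iff_exists.mp hve
  exact ⟨w, heM⟩

noncomputable def partner (hM : IsPerfectMatchingEdges G M) (v : V) : V :=
  (hM.exists_mk_mem v).choose

variable (hM : IsPerfectMatchingEdges G M)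

theorem mk_partner_mem (v : V) : s(v, hM.partner v) ∈ M :=
  (hM.exists_mk_mem v).choose_spec

theorem adj_partner (v : V) : G.Adj v (hM.partner v) :=
  hM.1 (hM.mk_partner_mem v)

theorem partner_partner (v : V) : hM.partner (hM.partner v) = v := by
  obtain ⟨e, -, huniq⟩ := hM.2 (hM.partner v)
  have h₁ := huniq _ ⟨hM.mk_partner_mem (hM.partner v), Sym2.mem_mk_left _ _⟩
  have h₂ := huniq _ ⟨Sym2.eq_swap ▸ hM.mk_partner_mem v, Sym2.mem_mk_left _ _⟩
  exact Sym2.congr_right.mp (h₁.trans h₂.symm)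

theorem partner_injective : Function.Injective hM.partner :=
  Function.LeftInverse.injective hM.partner_partner

theorem partner_mem_of_notMem
    (htri : ∀ a b w : V, s(a, b) ∈ M → ¬ (G.Adj a w ∧ G.Adj b w))
    (hpath : ∀ z a b w : V, s(a, b) ∈ M → G.Adj z a → G.Adj b w →
      z ≠ w → z ≠ b → w ≠ a → G.Adj z w)
    {s : Set V} (hs : Maximal (IsIndepSet' G) s) {a : V} (ha : a ∉ s) :
    hM.partner a ∈ s := by
  by_contra hb
  obtain ⟨z, hzs, haz⟩ := hs.exists_adj_mem_of_isIndepSet' ha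
  obtain ⟨w, hws, hbw⟩ := hs.exists_adj_mem_of_isIndepSet' hb
  have hzw : z ≠ w := by
    rintro rfl
    exact htri _ _ z (hM.mk_partner_mem a) ⟨haz, hbw⟩
  have hzb : z ≠ hM.partner a := fun h => hb (h ▸ hzs)
  have hwa : w ≠ a := fun h => ha (h ▸ hws)
  exact hs.1 hzs hws hzw (hpath z a _ w (hM.mk_partner_mem a) haz.symm hbw hzw hzb hwa)

theorem image_partner_eq_compl
    (htri : ∀ a b w : V, s(a, b) ∈ M → ¬ (G.Adj a w ∧ G.Adj b w))
    (hpath : ∀ z a b w : V, s(a, b) ∈ M → G.Adj z a → G.Adj b w →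
      z ≠ w → z ≠ b → w ≠ a → G.Adj z w)
    {s : Set V} (hs : Maximal (IsIndepSet' G) s) :
    hM.partner '' s = sᶜ := by
  ext u
  constructor
  · rintro ⟨v, hv, rfl⟩ hpv
    exact hs.1 hv hpv (hM.adj_partner v).ne (hM.adj_partner v)
  · intro hu
    exact ⟨_, hM.partner_mem_of_notMem htri hpath hs hu, hM.partner_partner u⟩

end IsPerfectMatchingEdges

theorem very_well_covered_of_matching_general {V : Type*} [Fintype V] (G : SimpleGraph V)
    (M : Set (Sym2 V)) (hM : IsPerfectMatchingEdges G M)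
    (htri : ∀ a b w : V, s(a, b) ∈ M → ¬ (G.Adj a w ∧ G.Adj b w))
    (hpath : ∀ z a b w : V, s(a, b) ∈ M → G.Adj z a → G.Adj b w →
      z ≠ w → z ≠ b → w ≠ a → G.Adj z w) :
    ∀ s : Set V, Maximal (IsIndepSet' G) s → s.ncard = Fintype.card V / 2 := by
  intro s hs
  rw [← Nat.card_eq_fintype_card]
  exact Set.ncard_eq_card_div_two_of_image_eq_compl hM.partner_injective
    (hM.image_partner_eq_compl htri hpath hs)

/-- Let `G` be a finite simple graph, without isolated vertices, on an even number of
vertices, with a perfect matching `M` such that (i) no edge of `M` lies in a triangle of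
`G`, and (ii) whenever an edge of `M` is the central edge of a path of length `3` in `G`,
the two endpoints of that path are adjacent in `G`.  Then every maximal independent set
of `G` has cardinality `|V(G)|/2`. -/
theorem very_well_covered_of_matching {V : Type*} [Fintype V] (G : SimpleGraph V)
    (hiso : ∀ v : V, ∃ w, G.Adj v w) (heven : Even (Fintype.card V))
    (M : Set (Sym2 V)) (hM : IsPerfectMatchingEdges G M)
    (htri : ∀ a b w : V, s(a, b) ∈ M → ¬ (G.Adj a w ∧ G.Adj b w))
    (hpath : ∀ z a b w : V, s(a, b) ∈ M → G.Adj z a → G.Adj b w →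
      z ≠ w → z ≠ b → w ≠ a → G.Adj z w) :
    ∀ s : Set V, Maximal (IsIndepSet' G) s → s.ncard = Fintype.card V / 2 :=
  very_well_covered_of_matching_general G M hM htri hpath
end

section
/- If every maximal independent set of a finite simple graph G (with an even number of vertices, no isolated vertices) has cardinality |V(G)|/2, then G has a perfect matching M such that no edge of M belongs to a triangle of G, and whenever an edge of M is the central edge of a path of length 3, the endpoints of the path are adjacent. -/
namespace VWCAux

variable {V : Type*} [Fintype V] {G : SimpleGraph V}

/-- The (open) neighborhood of a set of vertices. -/
def NS (G : SimpleGraph V) (A : Set V) : Set V := {v | ∃ a ∈ A, G.Adj a v}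

lemma indep_mono {s t : Set V} (h : IsIndepSet' G t) (hst : s ⊆ t) : IsIndepSet' G s :=
  h.mono hst

lemma exists_max_ext {P : Set V → Prop} {s : Set V} (hs : P s) :
    ∃ t, s ⊆ t ∧ Maximal P t :=
  Finite.exists_le_maximal hs

lemma maximal_dominates {S : Set V} (hS : Maximal (IsIndepSet' G) S) {v : V} (hv : v ∉ S) :
    ∃ u ∈ S, G.Adj u v := by
  by_contra h
  push_neg at h
  have hins : IsIndepSet' G (insert v S) := by
    intro a ha b hb hab
    rcases ha with rfl | ha
    · rcases hb with rfl | hb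
      · exact absurd rfl hab
      · exact fun hadj => h b hb hadj.symm
    · rcases hb with rfl | hb
      · exact fun hadj => h a ha hadj
      · exact hS.1 ha hb hab
  exact hv (hS.2 hins (Set.subset_insert v S) (Set.mem_insert v S))

/-- "Tool 3": for independent `A` and maximal independent `Z` in a very well-covered
graph, `|A \ Z| ≤ |Z ∩ N(A)|`. -/
lemma tool3 (hvwc : ∀ s : Set V, Maximal (IsIndepSet' G) s → s.ncard = Fintype.card V / 2)
    {A Z : Set V} (hA : IsIndepSet' G A) (hZ : Maximal (IsIndepSet' G) Z) :
    (A \ Z).ncard ≤ (Z ∩ NS G A).ncard := by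
  set B := NS G A with hB
  have hZ'ind : IsIndepSet' G ((Z \ B) ∪ (A \ Z)) := by
    intro a ha b hb hab
    rcases ha with ⟨haZ, haB⟩ | ⟨haA, _⟩
    · rcases hb with ⟨hbZ, _⟩ | ⟨hbA, _⟩
      · exact hZ.1 haZ hbZ hab
      · exact fun hadj => haB ⟨b, hbA, hadj.symm⟩
    · rcases hb with ⟨hbZ, hbB⟩ | ⟨hbA, _⟩
      · exact fun hadj => hbB ⟨a, haA, hadj⟩
      · exact hA haA hbA hab
  obtain ⟨Z'', hsub, hmax⟩ := exists_max_ext hZ'ind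
  have h1 : ((Z \ B) ∪ (A \ Z)).ncard ≤ Z''.ncard := Set.ncard_le_ncard hsub (Set.toFinite _)
  have h2 : Z''.ncard = Fintype.card V / 2 := hvwc _ hmax
  have h3 : Z.ncard = Fintype.card V / 2 := hvwc _ hZ
  have hdisj : Disjoint (Z \ B) (A \ Z) := by
    rw [Set.disjoint_left]
    rintro x ⟨hxZ, _⟩ ⟨_, hxZ'⟩
    exact hxZ' hxZ
  have h4 : ((Z \ B) ∪ (A \ Z)).ncard = (Z \ B).ncard + (A \ Z).ncard :=
    Set.ncard_union_eq hdisj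
  have h5 : (Z \ B).ncard = Z.ncard - (Z ∩ B).ncard := by
    rw [← Set.diff_self_inter]
    exact Set.ncard_diff Set.inter_subset_left
  have h6 : (Z ∩ B).ncard ≤ Z.ncard := Set.ncard_le_ncard Set.inter_subset_left (Set.toFinite _)
  omega

/-- Hall's condition: in a very well-covered graph every independent set `A`
satisfies `|N(A)| ≥ |A|`. -/
lemma lemmaH (hiso : ∀ v : V, ∃ w, G.Adj v w)
    (hvwc : ∀ s : Set V, Maximal (IsIndepSet' G) s → s.ncard = Fintype.card V / 2) :
    ∀ (n : ℕ) (A : Set V), IsIndepSet' G A → A.ncard ≤ n → A.ncard ≤ (NS G A).ncard := by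
  intro n
  induction n with
  | zero =>
    intro A _ h
    simp only [Nat.le_zero] at h
    simp [h]
  | succ n ih =>
    intro A hA hcard
    rcases Set.eq_empty_or_nonempty A with rfl | ⟨a₀, ha₀⟩
    · simp
    obtain ⟨b₀, hb₀⟩ := hiso a₀
    set B := NS G A with hBdef
    have hb₀B : b₀ ∈ B := ⟨a₀, ha₀, hb₀⟩
    have hsingle : ({b₀} : Set V) ⊆ B ∧ IsIndepSet' G {b₀} :=
      ⟨Set.singleton_subset_iff.2 hb₀B, Set.pairwise_singleton _ _⟩
    obtain ⟨C, hb₀C, hCmax⟩ :=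
      exists_max_ext (P := fun C => C ⊆ B ∧ IsIndepSet' G C) hsingle
    have hCB : C ⊆ B := hCmax.1.1
    have hCind : IsIndepSet' G C := hCmax.1.2
    obtain ⟨Z, hCZ, hZmax⟩ := exists_max_ext (P := IsIndepSet' G) hCind
    have hZB : Z ∩ B = C := by
      apply Set.Subset.antisymm
      · rintro v ⟨hvZ, hvB⟩
        by_contra hvC
        have hins : insert v C ⊆ B ∧ IsIndepSet' G (insert v C) :=
          ⟨Set.insert_subset hvB hCB, indep_mono hZmax.1 (Set.insert_subset hvZ hCZ)⟩
        exact hvC (hCmax.2 hins (Set.subset_insert v C) (Set.mem_insert v C))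
      · exact fun c hc => ⟨hCZ hc, hCB hc⟩
    set AC := {a ∈ A | ∀ c ∈ C, ¬ G.Adj a c} with hACdef
    have hACA : AC ⊆ A := fun a ha => ha.1
    have hAZ : A ∩ Z = AC := by
      apply Set.Subset.antisymm
      · rintro v ⟨hvA, hvZ⟩
        exact ⟨hvA, fun c hc hadj => hZmax.1 hvZ (hCZ hc) hadj.ne hadj⟩
      · rintro a ⟨haA, haC⟩
        refine ⟨haA, ?_⟩
        by_contra haZ
        obtain ⟨u, huZ, hadj⟩ := maximal_dominates hZmax haZ
        have huC : u ∈ C := hZB ▸ (⟨huZ, ⟨a, haA, hadj.symm⟩⟩ : u ∈ Z ∩ B)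
        exact haC u huC hadj.symm
    have hb₀inC : b₀ ∈ C := hb₀C rfl
    have ha₀AC : a₀ ∉ AC := fun h => h.2 b₀ hb₀inC hb₀
    have hlt : AC.ncard < A.ncard :=
      Set.ncard_lt_ncard ⟨hACA, fun hAsub => ha₀AC (hAsub ha₀)⟩ (Set.toFinite _)
    have hIH : AC.ncard ≤ (NS G AC).ncard := ih AC (indep_mono hA hACA) (by omega)
    have ht3 : (A \ Z).ncard ≤ (Z ∩ B).ncard := tool3 hvwc hA hZmax
    have hAdiff : A \ Z = A \ AC := by rw [← hAZ, Set.diff_self_inter]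
    rw [hAdiff, hZB] at ht3
    have h1 : (A \ AC).ncard = A.ncard - AC.ncard := Set.ncard_diff hACA
    have hNsub : C ∪ NS G AC ⊆ B := by
      apply Set.union_subset hCB
      rintro v ⟨a, haAC, hadj⟩
      exact ⟨a, hACA haAC, hadj⟩
    have hNdisj : Disjoint C (NS G AC) := by
      rw [Set.disjoint_left]
      rintro c hcC ⟨a, haAC, hadj⟩
      exact haAC.2 c hcC hadj
    have h2 : C.ncard + (NS G AC).ncard = (C ∪ NS G AC).ncard :=
      (Set.ncard_union_eq hNdisj).symm
    have h3 : (C ∪ NS G AC).ncard ≤ B.ncard := Set.ncard_le_ncard hNsub (Set.toFinite _)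
    have h4 : AC.ncard ≤ A.ncard := Set.ncard_le_ncard hACA (Set.toFinite _)
    omega

end VWCAux

open VWCAux

/-- If every maximal independent set of a finite simple graph `G` (with an even number of
vertices and no isolated vertices) has cardinality `|V(G)|/2`, then `G` has a perfect
matching `M` such that no edge of `M` belongs to a triangle of `G`, and whenever an edge
of `M` is the central edge of a path of length `3`, the endpoints of the path are
adjacent. -/
theorem matching_of_very_well_covered {V : Type*} [Fintype V] (G : SimpleGraph V)
    (hiso : ∀ v : V, ∃ w, G.Adj v w) (heven : Even (Fintype.card V))
    (hvwc : ∀ s : Set V, Maximal (IsIndepSet' G) s → s.ncard = Fintype.card V / 2) :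
    ∃ M : Set (Sym2 V), IsPerfectMatchingEdges G M ∧
      (∀ a b w : V, s(a, b) ∈ M → ¬ (G.Adj a w ∧ G.Adj b w)) ∧
      (∀ z a b w : V, s(a, b) ∈ M → G.Adj z a → G.Adj b w →
        z ≠ w → z ≠ b → w ≠ a → G.Adj z w) := by
  classical
  obtain ⟨S, -, hSmax⟩ :=
    exists_max_ext (P := IsIndepSet' G) (s := (∅ : Set V)) (Set.pairwise_empty _)
  have hScard : S.ncard = Fintype.card V / 2 := hvwc S hSmax
  have hcompl : S.ncard + Sᶜ.ncard = Fintype.card V := by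
    rw [Set.ncard_add_ncard_compl]
    exact Nat.card_eq_fintype_card
  have hTcard : (Sᶜ).ncard = Fintype.card V / 2 := by
    obtain ⟨m, hm⟩ := heven
    omega
  -- Hall's condition and Hall's theorem
  set t : ↥S → Finset V := fun x => (Set.toFinite (G.neighborSet ↑x)).toFinset with ht
  have ht_mem : ∀ (x : ↥S) (v : V), v ∈ t x ↔ G.Adj ↑x v := by
    intro x v
    simp [ht, SimpleGraph.mem_neighborSet]
  have hall_cond : ∀ s : Finset ↥S, s.card ≤ (s.biUnion t).card := by
    intro s
    set A : Set V := Subtype.val '' (↑s : Set ↥S) with hA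
    have hAS : A ⊆ S := by
      rintro v ⟨x, _, rfl⟩
      exact x.2
    have hAind : IsIndepSet' G A := indep_mono hSmax.1 hAS
    have hAcard : A.ncard = s.card := by
      rw [hA, Set.ncard_image_of_injective _ Subtype.val_injective, Set.ncard_coe_finset]
    have hNS_eq : NS G A = ↑(s.biUnion t) := by
      ext v
      simp only [NS, Set.mem_setOf_eq, Finset.coe_biUnion, Set.mem_iUnion, Finset.mem_coe]
      constructor
      · rintro ⟨a, ⟨x, hxs, rfl⟩, hadj⟩
        exact ⟨x, hxs, (ht_mem x v).2 hadj⟩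
      · rintro ⟨x, hxs, hv⟩
        exact ⟨↑x, ⟨x, hxs, rfl⟩, (ht_mem x v).1 hv⟩
    have hH := lemmaH hiso hvwc A.ncard A hAind le_rfl
    rw [hNS_eq, Set.ncard_coe_finset] at hH
    omega
  obtain ⟨f, hfinj, hf⟩ := (Finset.all_card_le_biUnion_card_iff_exists_injective t).1 hall_cond
  have hfadj : ∀ x : ↥S, G.Adj ↑x (f x) := fun x => (ht_mem x (f x)).1 (hf x)
  have hfT : ∀ x : ↥S, f x ∈ Sᶜ := by
    intro x hfS
    exact hSmax.1 x.2 hfS (hfadj x).ne (hfadj x)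
  have hrange_sub : Set.range f ⊆ Sᶜ := by
    rintro v ⟨x, rfl⟩
    exact hfT x
  have hrange_card : (Set.range f).ncard = S.ncard := by
    rw [← Nat.card_coe_set_eq, Nat.card_range_of_injective hfinj, Nat.card_coe_set_eq]
  have hrange : Set.range f = Sᶜ :=
    Set.eq_of_subset_of_ncard_le hrange_sub (by omega) (Set.toFinite _)
  -- the matching
  set M : Set (Sym2 V) := Set.range (fun x : ↥S => s((x : V), f x)) with hM
  -- every maximal independent set meets every matching pair
  have pairing : ∀ Z : Set V, Maximal (IsIndepSet' G) Z → ∀ x : ↥S, ((x : V) ∈ Z ∨ f x ∈ Z) := by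
    intro Z hZ x
    by_contra hcon
    push_neg at hcon
    haveI : Nonempty ↥S := ⟨x⟩
    set g : ↥Z → ↥S := fun v => if h : (v : V) ∈ S then ⟨v, h⟩ else Function.invFun f ↑v with hg
    have hgpos : ∀ (v : ↥Z) (h : (v : V) ∈ S), g v = ⟨v, h⟩ := by
      intro v h
      simp [hg, dif_pos h]
    have hginv : ∀ v : ↥Z, (v : V) ∉ S → f (g v) = ↑v := by
      intro v hv
      have hvmem : (v : V) ∈ Set.range f := by
        rw [hrange]
        exact hv
      rw [hg]
      simp only [dif_neg hv]
      exact Function.invFun_eq hvmem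
    have hginj : Function.Injective g := by
      intro v₁ v₂ heq
      by_cases h1 : (v₁ : V) ∈ S <;> by_cases h2 : (v₂ : V) ∈ S
      · rw [hgpos v₁ h1, hgpos v₂ h2] at heq
        exact Subtype.ext (congrArg (Subtype.val : ↥S → V) heq)
      · exfalso
        have hfe := hginv v₂ h2
        rw [← heq, hgpos v₁ h1] at hfe
        have hadj : G.Adj ↑v₁ ↑v₂ := hfe ▸ hfadj ⟨v₁, h1⟩
        exact hZ.1 v₁.2 v₂.2 hadj.ne hadj
      · exfalso
        have hfe := hginv v₁ h1
        rw [heq, hgpos v₂ h2] at hfe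
        have hadj : G.Adj ↑v₂ ↑v₁ := hfe ▸ hfadj ⟨v₂, h2⟩
        exact hZ.1 v₂.2 v₁.2 hadj.ne hadj
      · apply Subtype.ext
        rw [← hginv v₁ h1, ← hginv v₂ h2, heq]
    have hZcard : Z.ncard = Fintype.card V / 2 := hvwc Z hZ
    have hcards : Nat.card ↥Z = Nat.card ↥S := by
      rw [Nat.card_coe_set_eq, Nat.card_coe_set_eq, hZcard, hScard]
    have hgsurj : Function.Surjective g :=
      ((Nat.bijective_iff_injective_and_card g).2 ⟨hginj, hcards⟩).2
    obtain ⟨v, hv⟩ := hgsurj x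
    by_cases hvS : (v : V) ∈ S
    · rw [hgpos v hvS] at hv
      have : (x : V) ∈ Z := by
        rw [← congrArg Subtype.val hv]
        exact v.2
      exact hcon.1 this
    · have hfe := hginv v hvS
      rw [hv] at hfe
      exact hcon.2 (by rw [hfe]; exact v.2)
  refine ⟨M, ⟨?_, ?_⟩, ?_, ?_⟩
  · rintro e ⟨x, rfl⟩
    exact (hfadj x)
  · intro v
    by_cases hvS : v ∈ S
    · refine ⟨s(((⟨v, hvS⟩ : ↥S) : V), f ⟨v, hvS⟩), ⟨⟨⟨v, hvS⟩, rfl⟩, Sym2.mem_mk_left _ _⟩, ?_⟩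
      rintro e ⟨⟨x, rfl⟩, hve⟩
      rw [Sym2.mem_iff] at hve
      rcases hve with hvx | hvf
      · have hxeq : x = ⟨v, hvS⟩ := Subtype.ext hvx.symm
        rw [hxeq]
      · exfalso
        have := hfT x
        rw [← hvf] at this
        exact this hvS
    · have hvT : v ∈ Set.range f := by
        rw [hrange]
        exact hvS
      obtain ⟨x₀, hx₀⟩ := hvT
      refine ⟨s((x₀ : V), f x₀), ⟨⟨x₀, rfl⟩, by rw [hx₀]; exact Sym2.mem_mk_right _ _⟩, ?_⟩
      rintro e ⟨⟨x, rfl⟩, hve⟩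
      rw [Sym2.mem_iff] at hve
      rcases hve with hvx | hvf
      · exact absurd (hvx ▸ x.2) hvS
      · have : x = x₀ := hfinj (by rw [← hvf, hx₀])
        rw [this]
  · rintro a b w ⟨x, hx⟩ ⟨haw, hbw⟩
    obtain ⟨Z, hwZ, hZmax⟩ :=
      exists_max_ext (P := IsIndepSet' G) (s := ({w} : Set V)) (Set.pairwise_singleton _ _)
    have hwZ' : w ∈ Z := hwZ rfl
    have hpair := pairing Z hZmax x
    rw [Sym2.eq_iff] at hx
    rcases hx with ⟨hxa, hxb⟩ | ⟨hxb, hxa⟩ <;> rcases hpair with hin | hin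
    · exact hZmax.1 (hxa ▸ hin) hwZ' haw.ne haw
    · exact hZmax.1 (hxb ▸ hin) hwZ' hbw.ne hbw
    · exact hZmax.1 (hxb ▸ hin) hwZ' hbw.ne hbw
    · exact hZmax.1 (hxa ▸ hin) hwZ' haw.ne haw
  · rintro z a b w ⟨x, hx⟩ hza hbw hzw hzb hwa
    by_contra hadj
    have hpind : IsIndepSet' G {z, w} := by
      intro u hu v hv huv
      rcases hu with rfl | hu
      · rcases hv with rfl | hv
        · exact absurd rfl huv
        · rw [Set.mem_singleton_iff] at hv
          subst hv
          exact hadj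
      · rw [Set.mem_singleton_iff] at hu
        subst hu
        rcases hv with rfl | hv
        · exact fun h => hadj h.symm
        · rw [Set.mem_singleton_iff] at hv
          subst hv
          exact absurd rfl huv
    obtain ⟨Z, hsub, hZmax⟩ := exists_max_ext (P := IsIndepSet' G) hpind
    have hzZ : z ∈ Z := hsub (Set.mem_insert _ _)
    have hwZ : w ∈ Z := hsub (Set.mem_insert_of_mem _ rfl)
    have hpair := pairing Z hZmax x
    rw [Sym2.eq_iff] at hx
    rcases hx with ⟨hxa, hxb⟩ | ⟨hxb, hxa⟩ <;> rcases hpair with hin | hin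
    · exact hZmax.1 (hxa ▸ hin) hzZ hza.ne.symm hza.symm
    · exact hZmax.1 (hxb ▸ hin) hwZ hbw.ne hbw
    · exact hZmax.1 (hxb ▸ hin) hwZ hbw.ne hbw
    · exact hZmax.1 (hxa ▸ hin) hzZ hza.ne.symm hza.symm
end

section
/- Let G be a very well-covered graph with no odd cycle of length at most 5 (odd-girth ≥ 7), let e = {x,y} be an edge of G, and let G' be the graph on V(G) obtained by adding to G all edges {u,v} such that G contains a path u,x,y,v. Then G' is very well-covered. -/
/-- A finite graph is very well-covered if every maximal independent set has cardinality
half the number of vertices. -/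
def VeryWellCovered {V : Type*} [Fintype V] (G : SimpleGraph V) : Prop :=
  ∀ s : Set V, Maximal (IsIndepSet' G) s → s.ncard = Fintype.card V / 2

/-- Let `G` be a very well-covered graph (without isolated vertices, on an even number of
vertices) with no odd cycle of length at most `5`, let `{x,y}` be an edge of `G`, and let
`G'` be obtained from `G` by adding all edges `{u,v}` such that `G` contains a path
`u,x,y,v`.  Then `G'` is very well-covered. -/
theorem colon_graph_very_well_covered {V : Type*} [Fintype V] (G : SimpleGraph V)
    (hiso : ∀ v : V, ∃ w, G.Adj v w) (heven : Even (Fintype.card V))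
    (hvwc : VeryWellCovered G)
    (hgirth : ∀ (u : V) (c : G.Walk u u), c.IsCycle → Odd c.length → 7 ≤ c.length)
    (x y : V) (hxy : G.Adj x y)
    (G' : SimpleGraph V)
    (hG' : G' = G ⊔ SimpleGraph.fromRel (fun u v => G.Adj u x ∧ G.Adj y v)) :
    VeryWellCovered G' := by
  -- no triangles through the edge x-y
  have htri : ∀ c : V, G.Adj c x → G.Adj c y → False := by
    intro c hcx hcy
    have h1 : x ≠ y := hxy.ne
    have h2 : c ≠ x := hcx.ne
    have h3 : c ≠ y := hcy.ne
    have hcyc : (SimpleGraph.Walk.cons hxy (SimpleGraph.Walk.cons hcy.symm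
        (SimpleGraph.Walk.cons hcx SimpleGraph.Walk.nil))).IsCycle := by
      rw [SimpleGraph.Walk.isCycle_def]
      refine ⟨?_, by simp, ?_⟩
      · rw [SimpleGraph.Walk.isTrail_def]
        simp [h1, h2, h3, Sym2.eq_iff, h1.symm, h2.symm, h3.symm]
      · simp [h1, h2, h3, h1.symm, h2.symm, h3.symm]
    have h7 := hgirth x _ hcyc ⟨1, by simp⟩
    simp at h7
  have hadj : ∀ a b : V, G'.Adj a b ↔ G.Adj a b ∨
      (a ≠ b ∧ ((G.Adj a x ∧ G.Adj y b) ∨ (G.Adj b x ∧ G.Adj y a))) := by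
    subst hG'
    intro a b
    simp [SimpleGraph.fromRel_adj]
  intro s hs
  obtain ⟨hsi, hsmax⟩ := hs
  have hsiG : IsIndepSet' G s := fun a ha b hb hne h =>
    hsi ha hb hne ((hadj a b).2 (Or.inl h))
  -- every vertex outside s has a G'-neighbor in s
  have hmax' : ∀ w, w ∉ s → ∃ c ∈ s, G'.Adj w c := by
    intro w hw
    by_contra hno
    push_neg at hno
    have hins : IsIndepSet' G' (insert w s) := by
      intro p hp q hq hne hpq
      rcases hp with rfl | hp
      · rcases hq with rfl | hq
        · exact hne rfl
        · exact hno q hq hpq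
      · rcases hq with rfl | hq
        · exact hno p hp hpq.symm
        · exact hsi hp hq hne hpq
    exact hw (hsmax hins (Set.subset_insert w s) (Set.mem_insert w s))
  -- s contains x or y
  have hxs : x ∈ s ∨ y ∈ s := by
    by_contra hc
    push_neg at hc
    obtain ⟨hx, hy⟩ := hc
    obtain ⟨c, hcs, hc'⟩ := hmax' x hx
    obtain ⟨d, hds, hd'⟩ := hmax' y hy
    have hcx : G.Adj c x := by
      rcases (hadj x c).1 hc' with h | ⟨hne, h | h⟩
      · exact h.symm
      · exact absurd h.1 (G.irrefl)
      · exact h.1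
    have hdy : G.Adj y d := by
      rcases (hadj y d).1 hd' with h | ⟨hne, h | h⟩
      · exact h
      · exact h.2
      · exact absurd h.2 (G.irrefl)
    have hcd : c ≠ d := fun h => htri c hcx (h ▸ hdy.symm)
    exact hsi hcs hds hcd ((hadj c d).2 (Or.inr ⟨hcd, Or.inl ⟨hcx, hdy⟩⟩))
  -- s is a maximal independent set of G
  have hsmaxG : Maximal (IsIndepSet' G) s := by
    refine ⟨hsiG, ?_⟩
    intro t ht hst a hat
    by_contra has
    have hnoG : ∀ b ∈ s, ¬ G.Adj a b := by
      intro b hb hab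
      exact ht hat (hst hb) (fun h => has (h ▸ hb)) hab
    have key : ∀ q ∈ s, ¬ G'.Adj a q := by
      intro q hq hpq
      rcases (hadj a q).1 hpq with h | ⟨_, ⟨hax, hyq⟩ | ⟨hqx, hya⟩⟩
      · exact hnoG q hq h
      · rcases hxs with hxin | hyin
        · exact hnoG x hxin hax
        · by_cases hqy : y = q
          · exact G.irrefl (hqy ▸ hyq)
          · exact hsiG hyin hq hqy hyq
      · rcases hxs with hxin | hyin
        · by_cases hqx' : q = x
          · exact G.irrefl (hqx' ▸ hqx)
          · exact hsiG hq hxin hqx' hqx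
        · exact hnoG y hyin hya.symm
    have hins : IsIndepSet' G' (insert a s) := by
      intro p hp q hq hne hpq
      rcases hp with rfl | hp
      · rcases hq with rfl | hq
        · exact hne rfl
        · exact key q hq hpq
      · rcases hq with rfl | hq
        · exact key p hp hpq.symm
        · exact hsi hp hq hne hpq
    exact has (hsmax hins (Set.subset_insert a s) (Set.mem_insert a s))
  exact hvwc s hsmaxG
end

section
/- Let G be a very well-covered graph with odd-girth ≥ 7 having a perfect matching M satisfying: no edge of M lies in a triangle, and if an edge of M is the central edge of a length-3 path then the path's endpoints are adjacent. Let G' add to G all edges {u,v} with G containing a path u,x,y,v for a fixed edge {x,y} ∈ E(G). Then M is a perfect matching of G', no edge of M lies in a triangle of G', and whenever an edge of M is central in a length-3 path of G', the endpoints of that path are adjacent in G'. -/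
/-- Let `G` have odd-girth at least `7` and a perfect matching `M` such that no edge of
`M` lies in a triangle of `G` and every length-3 path of `G` with central edge in `M` has
adjacent endpoints.  Let `{x,y}` be an edge of `G` and let `G'` add to `G` all edges
`{u,v}` such that `G` contains a path `u,x,y,v` (or `u,y,x,v`).  Then `M` is a perfect
matching of `G'`, no edge of `M` lies in a triangle of `G'`, and every length-3 path of
`G'` with central edge in `M` has endpoints adjacent in `G'`. -/
theorem matching_conditions_in_colon_graph {V : Type*} [Fintype V] (G : SimpleGraph V)
    (hgirth : ∀ (u : V) (c : G.Walk u u), c.IsCycle → Odd c.length → 7 ≤ c.length)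
    (M : Set (Sym2 V)) (hM : IsPerfectMatchingEdges G M)
    (htri : ∀ a b w : V, s(a, b) ∈ M → ¬ (G.Adj a w ∧ G.Adj b w))
    (hpath : ∀ z a b w : V, s(a, b) ∈ M → G.Adj z a → G.Adj b w →
      z ≠ w → z ≠ b → w ≠ a → G.Adj z w)
    (x y : V) (hxy : G.Adj x y)
    (G' : SimpleGraph V)
    (hG' : G' = G ⊔ SimpleGraph.fromRel (fun u v => G.Adj u x ∧ G.Adj y v)) :
    IsPerfectMatchingEdges G' M ∧
      (∀ a b w : V, s(a, b) ∈ M → ¬ (G'.Adj a w ∧ G'.Adj b w)) ∧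
      (∀ z a b w : V, s(a, b) ∈ M → G'.Adj z a → G'.Adj b w →
        z ≠ w → z ≠ b → w ≠ a → G'.Adj z w) := by
  subst hG'
  -- no triangles in G
  have no3 : ∀ a b c : V, G.Adj a b → G.Adj b c → G.Adj c a → False := by
    intro a b c hab hbc hca
    have hc : (SimpleGraph.Walk.cons hab (.cons hbc (.cons hca .nil))).IsCycle := by
      simp [SimpleGraph.Walk.isCycle_def, SimpleGraph.Walk.isTrail_def,
        hab.ne, hbc.ne, hca.ne, hab.ne', hbc.ne', hca.ne']
    have := hgirth a _ hc (by simp; decide)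
    simp at this
  -- no pentagons in G
  have no5 : ∀ a b c d e : V, G.Adj a b → G.Adj b c → G.Adj c d → G.Adj d e → G.Adj e a →
      a ≠ c → a ≠ d → b ≠ d → b ≠ e → c ≠ e → False := by
    intro a b c d e hab hbc hcd hde hea hac had hbd hbe hce
    have hc : (SimpleGraph.Walk.cons hab
        (.cons hbc (.cons hcd (.cons hde (.cons hea .nil))))).IsCycle := by
      simp [SimpleGraph.Walk.isCycle_def, SimpleGraph.Walk.isTrail_def,
        hab.ne, hbc.ne, hcd.ne, hde.ne, hea.ne, hab.ne', hbc.ne', hcd.ne', hde.ne', hea.ne',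
        hac, had, hbd, hbe, hce, hac.symm, had.symm, hbd.symm, hbe.symm, hce.symm]
    have := hgirth a _ hc (by simp; decide)
    simp at this
  have hMadj : ∀ a b : V, s(a, b) ∈ M → G.Adj a b := fun a b h => (hM.1 h)
  -- adjacency in the new graph
  have hadj : ∀ u v : V,
      (G ⊔ SimpleGraph.fromRel (fun u v => G.Adj u x ∧ G.Adj y v)).Adj u v ↔
      G.Adj u v ∨ (u ≠ v ∧ ((G.Adj u x ∧ G.Adj y v) ∨ (G.Adj v x ∧ G.Adj y u))) := by
    intro u v
    simp [SimpleGraph.fromRel_adj]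
  -- the mixed triangle case
  have mixed : ∀ a b w : V, s(a, b) ∈ M → G.Adj a w → b ≠ w →
      ((G.Adj b x ∧ G.Adj y w) ∨ (G.Adj w x ∧ G.Adj y b)) → False := by
    intro a b w hab haw hbw h
    have hMab := hMadj a b hab
    rcases h with ⟨hbx, hyw⟩ | ⟨hwx, hyb⟩
    · by_cases hxa : x = a
      · subst hxa
        exact no3 x w y haw hyw.symm hxy.symm
      · by_cases hwx : w = x
        · subst hwx
          exact no3 a b w hMab hbx haw.symm
        · have h' := hpath w a b x hab haw.symm hbx hwx hbw.symm hxa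
          exact no3 w x y h' hxy hyw
    · by_cases hay : a = y
      · subst hay
        exact no3 a w x haw hwx hxy
      · by_cases hax : a = x
        · subst hax
          exact no3 a y b hxy hyb hMab.symm
        · by_cases hbx : b = x
          · subst hbx
            exact no3 a b w hMab hwx.symm haw.symm
          · by_cases hyw : y = w
            · subst hyw
              exact no3 a b y hMab hyb.symm haw.symm
            · exact no5 a b y x w hMab hyb.symm hxy.symm hwx.symm haw.symm
                hay hax hbx hbw hyw
  -- the double-new-edge pentagon case
  have rr : ∀ a b w : V, s(a, b) ∈ M → a ≠ w → w ≠ b →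
      (G.Adj a x ∧ G.Adj y w) → (G.Adj w x ∧ G.Adj y b) → False := by
    intro a b w hab haw hwb ⟨hax, hyw⟩ ⟨hwx, hyb⟩
    have hMab := hMadj a b hab
    by_cases hay : a = y
    · subst hay
      exact no3 a x w hax hwx.symm hyw.symm
    · by_cases hxb : x = b
      · subst hxb
        exact no3 x w y hwx.symm hyw.symm hyb
      · exact no5 a x w y b hax hwx.symm hyw.symm hyb hMab.symm
          haw hay hxy.ne hxb hwb
  refine ⟨⟨fun e he => SimpleGraph.edgeSet_mono le_sup_left (hM.1 he), hM.2⟩, ?_, ?_⟩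
  · -- no triangle through an edge of M
    rintro a b w hab ⟨h1, h2⟩
    rw [hadj] at h1 h2
    have hab' : s(b, a) ∈ M := Sym2.eq_swap ▸ hab
    have hMab := hMadj a b hab
    rcases h1 with h1 | ⟨hne1, h1⟩ <;> rcases h2 with h2 | ⟨hne2, h2⟩
    · exact htri a b w hab ⟨h1, h2⟩
    · exact mixed a b w hab h1 hne2 h2
    · exact mixed b a w hab' h2 hne1 h1
    · rcases h1 with ⟨hax, hyw⟩ | ⟨hwx, hya⟩ <;> rcases h2 with ⟨hbx, hyw'⟩ | ⟨hwx', hyb⟩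
      · exact no3 a b x hMab hbx hax.symm
      · exact rr a b w hab hne1 (fun h => hne2 h.symm) ⟨hax, hyw⟩ ⟨hwx', hyb⟩
      · exact rr b a w hab' hne2 (fun h => hne1 h.symm) ⟨hbx, hyw'⟩ ⟨hwx, hya⟩
      · exact no3 a b y hMab hyb.symm hya
  · -- length-3 paths centred at M
    intro z a b w hab h1 h2 hzw hzb hwa
    rw [hadj] at h1 h2 ⊢
    have hMab := hMadj a b hab
    rcases h1 with h1 | ⟨hza, h1⟩ <;> rcases h2 with h2 | ⟨hbw, h2⟩
    · exact Or.inl (hpath z a b w hab h1 h2 hzw hzb hwa)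
    · rcases h2 with ⟨hbx, hyw⟩ | ⟨hwx, hyb⟩
      · by_cases hxa : x = a
        · exact Or.inr ⟨hzw, Or.inl ⟨hxa ▸ h1, hyw⟩⟩
        · by_cases hzx : z = x
          · subst hzx
            exact absurd (no3 a b z hMab hbx h1) not_false
          · exact Or.inr ⟨hzw, Or.inl ⟨hpath z a b x hab h1 hbx hzx hzb hxa, hyw⟩⟩
      · by_cases hya : y = a
        · exact Or.inr ⟨hzw, Or.inr ⟨hwx, hya ▸ h1.symm⟩⟩
        · by_cases hzy : z = y
          · subst hzy
            exact absurd (no3 a b z hMab hyb.symm h1) not_false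
          · exact Or.inr ⟨hzw, Or.inr ⟨hwx, (hpath z a b y hab h1 hyb.symm hzy hzb hya).symm⟩⟩
    · rcases h1 with ⟨hzx, hya⟩ | ⟨hax, hyz⟩
      · by_cases hyb : y = b
        · exact Or.inr ⟨hzw, Or.inl ⟨hzx, hyb ▸ h2⟩⟩
        · by_cases hyw : y = w
          · subst hyw
            exact absurd (no3 a b y hMab h2 hya) not_false
          · exact Or.inr ⟨hzw, Or.inl ⟨hzx, hpath y a b w hab hya h2 hyw hyb hwa⟩⟩
      · by_cases hxb : x = b
        · exact Or.inr ⟨hzw, Or.inr ⟨(hxb ▸ h2).symm, hyz⟩⟩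
        · by_cases hxw : x = w
          · subst hxw
            exact absurd (no3 a b x hMab h2 hax.symm) not_false
          · exact Or.inr ⟨hzw, Or.inr ⟨(hpath x a b w hab hax.symm h2 hxw hxb hwa).symm, hyz⟩⟩
    · rcases h1 with ⟨hzx, hya⟩ | ⟨hax, hyz⟩ <;> rcases h2 with ⟨hbx, hyw⟩ | ⟨hwx, hyb⟩
      · exact Or.inr ⟨hzw, Or.inl ⟨hzx, hyw⟩⟩
      · exact absurd (no3 a b y hMab hyb.symm hya) not_false
      · exact absurd (no3 a b x hMab hbx hax.symm) not_false
      · exact Or.inr ⟨hzw, Or.inr ⟨hwx, hyz⟩⟩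
end

section
/- Let G be a graph with odd-girth at least 2k+1 (k ≥ 2), and let e1,...,es be edges of G with 1 ≤ s ≤ k-1. Then no vertex u of G is even-connected to itself with respect to the product e1⋯es; that is, there is no closed walk u = p_0, p_1, ..., p_{2l+1} = u in G with l ≤ s such that each edge {p_{2t+1}, p_{2t+2}} (0 ≤ t ≤ l-1) equals some e_i, with each e_i used at most its multiplicity. -/
/-!
Counting the edges `e_i` used shows that an even-connecting walk from `u` to itself is a closed
walk of odd length at most `2s + 1 ≤ 2k - 1`. Every closed walk of odd length contains an odd
cycle that is no longer, which contradicts the odd-girth bound.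
-/

namespace SimpleGraph.Walk

variable {V : Type*} {G : SimpleGraph V}

theorem exists_isPath_or_exists_odd_isCycle [DecidableEq V] {u v : V} (p : G.Walk u v) :
    (∃ q : G.Walk u v, q.IsPath ∧ q.length ≤ p.length ∧ Even (p.length + q.length)) ∨
      ∃ (x : V) (c : G.Walk x x), c.IsCycle ∧ Odd c.length ∧ c.length ≤ p.length := by
  induction p with
  | nil => exact Or.inl ⟨nil, .nil, le_rfl, by simp⟩
  | @cons u w v huw p ih =>
    rcases ih with ⟨q, hq, hqp, hpar⟩ | ⟨x, c, hc, hodd, hcp⟩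
    case inr => exact Or.inr ⟨x, c, hc, hodd, by simp only [length_cons]; omega⟩
    by_cases hu : u ∈ q.support
    case neg =>
      exact Or.inl ⟨cons huw q, (cons_isPath_iff huw q).2 ⟨hq, hu⟩, by simpa using hqp,
        by rw [length_cons, length_cons, add_add_add_comm]; exact hpar.add even_two⟩
    -- `q` passes through `u`: split it there into a closed part `cons huw t` and a path `d`.
    set t := q.takeUntil u hu
    set d := q.dropUntil u hu
    have hsplit : t.length + d.length = q.length := by
      rw [← length_append, take_spec]
    have ht : t.length ≠ 0 := fun h => huw.ne (eq_of_length_eq_zero h).symm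
    rcases Nat.even_or_odd t.length with hteven | htodd
    · refine Or.inr ⟨u, cons huw t, ?_, by simpa [Nat.odd_add_one] using hteven, ?_⟩
      · rw [isCycle_iff_isPath_tail_and_le_length]
        obtain ⟨m, hm⟩ := hteven
        exact ⟨by simpa using hq.takeUntil hu, by simp only [length_cons]; omega⟩
      · simp only [length_cons]; omega
    · refine Or.inl ⟨d, hq.dropUntil hu, by simp only [length_cons]; omega, ?_⟩
      rw [← hsplit] at hpar
      simp only [length_cons]
      grind

theorem exists_odd_isCycle_of_odd_length {u : V} (p : G.Walk u u) (hp : Odd p.length) :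
    ∃ (x : V) (c : G.Walk x x), c.IsCycle ∧ Odd c.length ∧ c.length ≤ p.length := by
  classical
  refine p.exists_isPath_or_exists_odd_isCycle.resolve_left ?_
  rintro ⟨q, hq, -, hpar⟩
  rw [(isPath_iff_nil.1 hq).length_eq_zero, add_zero] at hpar
  exact Nat.not_even_iff_odd.2 hp hpar

end SimpleGraph.Walk

/-- Vertices `u` and `v` are even-connected with respect to the product of the edges in
the list `es`: there is a walk `u = p_0, p_1, …, p_{2l+1} = v` in `G` with `l ≥ 1` such
that each edge `{p_{2t+1}, p_{2t+2}}` (for `0 ≤ t ≤ l-1`) is one of the edges of `es`,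
and each edge of `es` is used at most as many times as it occurs in `es`. -/
def EvenConnected {V : Type*} (G : SimpleGraph V) (es : List (Sym2 V)) (u v : V) : Prop :=
  ∃ (p : G.Walk u v) (l : ℕ), 1 ≤ l ∧ p.length = 2 * l + 1 ∧
    (↑(List.ofFn fun t : Fin l => s(p.getVert (2 * ↑t + 1), p.getVert (2 * ↑t + 2))) :
      Multiset (Sym2 V)) ≤ (↑es : Multiset (Sym2 V))

theorem EvenConnected.exists_walk {V : Type*} {G : SimpleGraph V} {es : List (Sym2 V)} {u v : V}
    (h : EvenConnected G es u v) :
    ∃ p : G.Walk u v, Odd p.length ∧ p.length ≤ 2 * es.length + 1 := by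
  obtain ⟨p, l, -, hp, hle⟩ := h
  have hl : l ≤ es.length := by simpa using Multiset.card_le_card hle
  exact ⟨p, hp ▸ odd_two_mul_add_one l, by omega⟩

theorem not_evenConnected_self_general {V : Type*} (G : SimpleGraph V) (k : ℕ)
    (hgirth : ∀ (u : V) (c : G.Walk u u), c.IsCycle → Odd c.length → 2 * k + 1 ≤ c.length)
    (es : List (Sym2 V))
    (hsk : es.length ≤ k - 1) :
    ∀ u : V, ¬ EvenConnected G es u u := by
  intro u h
  obtain ⟨p, hodd, hlen⟩ := h.exists_walk
  obtain ⟨x, c, hc, hcodd, hcp⟩ := p.exists_odd_isCycle_of_odd_length hodd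
  have := hgirth x c hc hcodd
  have := hc.three_le_length
  omega

/-- Let `G` have odd-girth at least `2k+1` (`k ≥ 2`) and let `e₁, …, e_s` be edges of `G`
with `1 ≤ s ≤ k-1`.  Then no vertex of `G` is even-connected to itself with respect to
the product `e₁ ⋯ e_s`. -/
theorem not_evenConnected_self {V : Type*} [Fintype V] (G : SimpleGraph V) (k : ℕ)
    (hk : 2 ≤ k)
    (hgirth : ∀ (u : V) (c : G.Walk u u), c.IsCycle → Odd c.length → 2 * k + 1 ≤ c.length)
    (es : List (Sym2 V)) (hes : ∀ e ∈ es, e ∈ G.edgeSet)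
    (hs : 1 ≤ es.length) (hsk : es.length ≤ k - 1) :
    ∀ u : V, ¬ EvenConnected G es u u :=
  not_evenConnected_self_general G k hgirth es hsk
end

section
/- Let G' be obtained from G by adding edges {u,v} whenever G contains a path u,x,y,v or u,y,x,v for a fixed edge {x,y} of G, and suppose odd-girth(G) ≥ 7. If an edge {x',y'} is the central edge of a path z, x', y', w in G' where exactly one of {z,x'}, {y',w} is a new edge (in E(G')\E(G)), and G satisfies the very well-covered matching condition for {x',y'} ∈ M, then z and w are adjacent in G'. -/
/-- Let `G` have odd-girth at least `7` and a perfect matching `M` satisfying the very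
well-covered matching conditions.  Let `{x,y}` be an edge of `G` and let `G'` add to `G`
all edges `{u,v}` with a path `u,x,y,v` (or `u,y,x,v`) in `G`.  If `{x',y'} ∈ M` is the
central edge of a path `z, x', y', w` of `G'` in which exactly one of `{z,x'}`, `{y',w}`
is a new edge (in `E(G') \ E(G)`), then `z` and `w` are adjacent in `G'`. -/
theorem endpoints_adjacent_one_new_edge {V : Type*} [Fintype V] (G : SimpleGraph V)
    (hgirth : ∀ (u : V) (c : G.Walk u u), c.IsCycle → Odd c.length → 7 ≤ c.length)
    (M : Set (Sym2 V)) (hM : IsPerfectMatchingEdges G M)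
    (htri : ∀ a b w : V, s(a, b) ∈ M → ¬ (G.Adj a w ∧ G.Adj b w))
    (hpath : ∀ z a b w : V, s(a, b) ∈ M → G.Adj z a → G.Adj b w →
      z ≠ w → z ≠ b → w ≠ a → G.Adj z w)
    (x y : V) (hxy : G.Adj x y)
    (G' : SimpleGraph V)
    (hG' : G' = G ⊔ SimpleGraph.fromRel (fun u v => G.Adj u x ∧ G.Adj y v))
    (x' y' z w : V) (hM' : s(x', y') ∈ M)
    (hzx' : G'.Adj z x') (hy'w : G'.Adj y' w)
    (hzw : z ≠ w) (hzy' : z ≠ y') (hwx' : w ≠ x')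
    (hone : (¬ G.Adj z x' ∧ G.Adj y' w) ∨ (G.Adj z x' ∧ ¬ G.Adj y' w)) :
    G'.Adj z w := by
  subst hG'
  simp only [SimpleGraph.sup_adj, SimpleGraph.fromRel_adj] at hzx' hy'w ⊢
  rcases hone with ⟨hnz, hw⟩ | ⟨hz, hnw⟩
  · rcases hzx' with h | ⟨hne, h⟩
    · exact absurd h hnz
    rcases h with ⟨hzx, hyx'⟩ | ⟨hx'x, hyz⟩
    · by_cases hyy' : y = y'
      · exact Or.inr ⟨hzw, Or.inl ⟨hzx, hyy' ▸ hw⟩⟩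
      by_cases hyw : y = w
      · exact absurd ⟨hyw ▸ hyx'.symm, hw⟩ (htri x' y' w hM')
      exact Or.inr ⟨hzw, Or.inl ⟨hzx, hpath y x' y' w hM' hyx' hw hyw hyy' hwx'⟩⟩
    · by_cases hxy' : x = y'
      · exact Or.inr ⟨hzw, Or.inr ⟨(hxy' ▸ hw : G.Adj x w).symm, hyz⟩⟩
      by_cases hxw : x = w
      · exact absurd ⟨hxw ▸ hx'x, hw⟩ (htri x' y' w hM')
      exact Or.inr ⟨hzw, Or.inr ⟨(hpath x x' y' w hM' hx'x.symm hw hxw hxy' hwx').symm, hyz⟩⟩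
  · rcases hy'w with h | ⟨hne, h⟩
    · exact absurd h hnw
    rcases h with ⟨hy'x, hyw⟩ | ⟨hwx, hyy'⟩
    · by_cases hxx' : x = x'
      · exact Or.inr ⟨hzw, Or.inl ⟨hxx' ▸ hz, hyw⟩⟩
      by_cases hzx : z = x
      · exact absurd ⟨hzx ▸ hz.symm, hy'x⟩ (htri x' y' x hM')
      exact Or.inr ⟨hzw, Or.inl ⟨hpath z x' y' x hM' hz hy'x hzx hzy' hxx', hyw⟩⟩
    · have hM'' : s(y', x') ∈ M := by rwa [Sym2.eq_swap]
      by_cases hyx' : y = x'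
      · exact Or.inr ⟨hzw, Or.inr ⟨hwx, (hyx' ▸ hz.symm : G.Adj y z)⟩⟩
      by_cases hyz : y = z
      · exact absurd ⟨(hyz ▸ hyy' : G.Adj z y').symm, hz.symm⟩ (htri y' x' z hM'')
      exact Or.inr ⟨hzw, Or.inr ⟨hwx, hpath y y' x' z hM'' hyy' hz.symm hyz hyx' hzy'⟩⟩
end

section
/- Let G be a graph with odd-girth(G) ≥ 2k+1 (k ≥ 2), {x,y} ∈ E(G), and G' the graph with E(G') = E(G) ∪ {{u,v} : G has path u,x,y,v or u,y,x,v}. Suppose C: w_1,...,w_{2ℓ-1} is an odd cycle in G' with ℓ ≤ k-1 containing two edges {w_i,w_{i+1}}, {w_j,w_{j+1}} ∈ E(G')\E(G) (i < j) realized by paths w_i,x,y,w_{i+1} and w_j,y,x,w_{j+1} in G. Then G contains a closed odd walk of length at most 2ℓ+1, hence an odd cycle of length at most 2k-1, a contradiction. -/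
open SimpleGraph
open scoped Classical

namespace OddGirthAux

variable {V : Type*}

/-- Split a walk at the first edge satisfying `P`. -/
lemma split_at_first_edge {H : SimpleGraph V} (P : Sym2 V → Prop) :
    ∀ {p q : V} (w : H.Walk p q), (∃ e ∈ w.edges, P e) →
    ∃ (s t : V) (w₁ : H.Walk p s) (h : H.Adj s t) (w₂ : H.Walk t q),
      w = w₁.append (Walk.cons h w₂) ∧ P s(s, t) ∧ ∀ e ∈ w₁.edges, ¬ P e := by
  intro p q w
  induction w with
  | nil => rintro ⟨e, he, -⟩; simp at he
  | @cons u a q h w ih =>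
    intro hex
    by_cases hP : P s(u, a)
    · exact ⟨u, a, Walk.nil, h, w, by simp, hP, by simp⟩
    · have hex' : ∃ e ∈ w.edges, P e := by
        obtain ⟨e, he, hPe⟩ := hex
        rw [Walk.edges_cons, List.mem_cons] at he
        rcases he with rfl | he
        · exact absurd hPe hP
        · exact ⟨e, he, hPe⟩
      obtain ⟨s, t, w₁, h', w₂, heq, hPst, hall⟩ := ih hex'
      refine ⟨s, t, Walk.cons h w₁, h', w₂, ?_, hPst, ?_⟩
      · rw [Walk.cons_append, heq]
      · intro e he
        rw [Walk.edges_cons, List.mem_cons] at he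
        rcases he with rfl | he
        · exact hP
        · exact hall e he

lemma split_at_dup_vertex {H : SimpleGraph V} :
    ∀ {p q : V} (w : H.Walk p q), ¬ w.support.Nodup →
    ∃ (t : V) (wa : H.Walk p t) (wb : H.Walk t t) (wc : H.Walk t q),
      w = wa.append (wb.append wc) ∧ 0 < wb.length := by
  intro p q w
  induction w with
  | nil => intro hnd; simp at hnd
  | @cons u a q h w ih =>
    intro hnd
    rw [Walk.support_cons, List.nodup_cons] at hnd
    push_neg at hnd
    by_cases hu : u ∈ w.support
    · refine ⟨u, Walk.nil, Walk.cons h (w.takeUntil u hu), w.dropUntil u hu, ?_, ?_⟩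
      · rw [Walk.nil_append, Walk.cons_append, Walk.take_spec]
      · simp [Walk.length_cons]
    · obtain ⟨t, wa, wb, wc, heq, hpos⟩ := ih (hnd hu)
      exact ⟨t, Walk.cons h wa, wb, wc, by rw [Walk.cons_append, heq], hpos⟩

lemma exists_odd_cycle {H : SimpleGraph V} :
    ∀ (n : ℕ) {v : V} (w : H.Walk v v), w.length ≤ n → Odd w.length →
    ∃ (u : V) (c : H.Walk u u), c.IsCycle ∧ Odd c.length ∧ c.length ≤ w.length := by
  intro n
  induction n with
  | zero =>
    intro v w hl ho
    rw [Nat.le_zero] at hl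
    rw [hl] at ho
    simp at ho
  | succ n ih =>
    intro v w hl ho
    cases w with
    | nil => simp at ho
    | @cons _ r _ h w' =>
      by_cases hcyc : (Walk.cons h w').IsCycle
      · exact ⟨v, Walk.cons h w', hcyc, ho, le_rfl⟩
      rw [Walk.cons_isCycle_iff] at hcyc
      push_neg at hcyc
      have hlencons : (Walk.cons h w').length = w'.length + 1 := Walk.length_cons _ _
      by_cases hpath : w'.IsPath
      · -- the edge s(v, r) is repeated
        have hedge : s(v, r) ∈ w'.edges := hcyc hpath
        obtain ⟨s, t, w₁, h', w₂, heq, hPst, -⟩ :=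
          split_at_first_edge (fun e => e = s(v, r)) w' ⟨s(v, r), hedge, rfl⟩
        have hlen' : w'.length = w₁.length + 1 + w₂.length := by
          rw [heq]; simp [Walk.length_append, Walk.length_cons]; omega
        rw [Sym2.eq_iff] at hPst
        rcases hPst with ⟨rfl, rfl⟩ | ⟨rfl, rfl⟩
        · -- dart (v, r) : w₁ : r → v, w₂ : r → v
          have hcl : (w₁.reverse.append w₂).length = w₁.length + w₂.length := by
            simp [Walk.length_append, Walk.length_reverse]
          have hco : Odd (w₁.reverse.append w₂).length := by
            rw [Nat.odd_iff] at ho ⊢; omega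
          obtain ⟨u, c, hc, hcodd, hcle⟩ := ih (w₁.reverse.append w₂) (by omega) hco
          exact ⟨u, c, hc, hcodd, by omega⟩
        · -- dart (r, v) : w₁ : r → r, w₂ : v → v
          by_cases ho₁ : Odd w₁.length
          · obtain ⟨u, c, hc, hcodd, hcle⟩ := ih w₁ (by omega) ho₁
            exact ⟨u, c, hc, hcodd, by omega⟩
          · have ho₂ : Odd w₂.length := by
              rw [Nat.odd_iff] at ho ⊢; rw [Nat.odd_iff] at ho₁; omega
            obtain ⟨u, c, hc, hcodd, hcle⟩ := ih w₂ (by omega) ho₂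
            exact ⟨u, c, hc, hcodd, by omega⟩
      · -- a vertex repeats in w'
        have hnd : ¬ w'.support.Nodup := fun hn => hpath (Walk.IsPath.mk' hn)
        obtain ⟨t, wa, wb, wc, heq, hpos⟩ := split_at_dup_vertex w' hnd
        have hlen' : w'.length = wa.length + (wb.length + wc.length) := by
          rw [heq]; simp [Walk.length_append]
        by_cases ho₁ : Odd wb.length
        · obtain ⟨u, c, hc, hcodd, hcle⟩ := ih wb (by omega) ho₁
          exact ⟨u, c, hc, hcodd, by omega⟩
        · have hW2 : (Walk.cons h (wa.append wc)).length = wa.length + wc.length + 1 := by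
            simp [Walk.length_cons, Walk.length_append]
          have ho₂ : Odd (Walk.cons h (wa.append wc)).length := by
            rw [Nat.odd_iff] at ho ⊢; rw [Nat.odd_iff] at ho₁; omega
          obtain ⟨u, c, hc, hcodd, hcle⟩ := ih (Walk.cons h (wa.append wc)) (by omega) ho₂
          exact ⟨u, c, hc, hcodd, by omega⟩


/-- A walk in `G` is also a walk in any supergraph. -/
lemma liftWalk {G G' : SimpleGraph V} (hle : G ≤ G') {a b : V} (w : G.Walk a b) :
    ∃ w' : G'.Walk a b, w'.length = w.length ∧ ∀ e ∈ w'.edges, e ∈ G.edgeSet := by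
  refine ⟨w.transfer G' (fun e he => (G.edgeSet_mono hle) (w.edges_subset_edgeSet he)), ?_, ?_⟩
  · exact Walk.length_transfer w _
  · intro e he
    rw [Walk.edges_transfer] at he
    exact w.edges_subset_edgeSet he

lemma to_odd_G_walk {G G' : SimpleGraph V} {x y : V} (hxy : G.Adj x y)
    (hle : G ≤ G')
    (hnew : ∀ s t : V, G'.Adj s t → s(s, t) ∉ G.edgeSet →
      (G.Adj s x ∧ G.Adj y t) ∨ (G.Adj t x ∧ G.Adj y s)) :
    ∀ (N : ℕ) {p : V} (w : G'.Walk p p),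
      (w.edges.filter (fun e => e ∉ G.edgeSet)).length ≤ N → Odd w.length →
      ∃ (q : V) (w' : G.Walk q q), Odd w'.length ∧ w'.length ≤ w.length + 2 := by
  intro N
  induction N with
  | zero =>
    intro p w h0 hodd
    have hall : ∀ e ∈ w.edges, e ∈ G.edgeSet := by
      intro e he
      by_contra hne
      have hmem : e ∈ w.edges.filter (fun e => e ∉ G.edgeSet) :=
        List.mem_filter.2 ⟨he, by simpa using hne⟩
      have := List.length_pos_iff.2 (List.ne_nil_of_mem hmem)
      omega
    exact ⟨p, w.transfer G hall, by rwa [Walk.length_transfer],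
      by rw [Walk.length_transfer]; omega⟩
  | succ N ih =>
    intro p w hN hodd
    by_cases hex : ∃ e ∈ w.edges, e ∉ G.edgeSet
    case neg =>
      push_neg at hex
      have hall : ∀ e ∈ w.edges, e ∈ G.edgeSet := hex
      exact ⟨p, w.transfer G hall, by rwa [Walk.length_transfer],
        by rw [Walk.length_transfer]; omega⟩
    case pos =>
      obtain ⟨s, t, w₁, h₁, w₂', heq, hP₁, hall₁⟩ :=
        split_at_first_edge (fun e => e ∉ G.edgeSet) w hex
      have hall₁' : ∀ e ∈ w₁.edges, e ∈ G.edgeSet := fun e he => not_not.mp (hall₁ e he)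
      have hor₁ := hnew s t h₁ hP₁
      have hlen : w.length = w₁.length + 1 + w₂'.length := by
        rw [heq]; simp [Walk.length_append, Walk.length_cons]; omega
      by_cases hex₂ : ∃ e ∈ w₂'.edges, e ∉ G.edgeSet
      case neg =>
        -- exactly one new edge: replace it by a path of length 3 through x, y
        push_neg at hex₂
        have hall₂ : ∀ e ∈ w₂'.edges, e ∈ G.edgeSet := hex₂
        have conn : ∃ cn : G.Walk s t, cn.length = 3 := by
          rcases hor₁ with ⟨hsx, hyt⟩ | ⟨htx, hys⟩
          · exact ⟨Walk.cons hsx (Walk.cons hxy (Walk.cons hyt Walk.nil)), rfl⟩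
          · exact ⟨Walk.cons hys.symm (Walk.cons hxy.symm (Walk.cons htx.symm Walk.nil)), rfl⟩
        obtain ⟨cn, hcn⟩ := conn
        have hlc : (((w₂'.transfer G hall₂).append (w₁.transfer G hall₁')).append cn).length
            = w₂'.length + w₁.length + 3 := by
          simp [Walk.length_append, Walk.length_transfer, hcn]
        refine ⟨t, ((w₂'.transfer G hall₂).append (w₁.transfer G hall₁')).append cn, ?_, ?_⟩
        · rw [Nat.odd_iff] at hodd ⊢
          omega
        · omega
      case pos =>
        obtain ⟨s', t', w₃, h₂, w₄, heq₂, hP₂, hall₃⟩ :=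
          split_at_first_edge (fun e => e ∉ G.edgeSet) w₂' hex₂
        have hall₃' : ∀ e ∈ w₃.edges, e ∈ G.edgeSet := fun e he => not_not.mp (hall₃ e he)
        have hor₂ := hnew s' t' h₂ hP₂
        have hlen₂ : w₂'.length = w₃.length + 1 + w₄.length := by
          rw [heq₂]; simp [Walk.length_append, Walk.length_cons]; omega
        -- connectors: conn₁ : s' → t  and  conn₂ : s → t', of equal length δ ∈ {2, 3}
        have conns : ∃ (c₁ : G.Walk s' t) (c₂ : G.Walk s t'),
            c₁.length = c₂.length ∧ 2 ≤ c₁.length ∧ c₁.length ≤ 3 := by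
          rcases hor₁ with ⟨hsx, hyt⟩ | ⟨htx, hys⟩ <;>
            rcases hor₂ with ⟨hs'x, hyt'⟩ | ⟨ht'x, hys'⟩
          · exact ⟨Walk.cons hs'x (Walk.cons hxy (Walk.cons hyt Walk.nil)),
              Walk.cons hsx (Walk.cons hxy (Walk.cons hyt' Walk.nil)), rfl, by norm_num, by norm_num⟩
          · exact ⟨Walk.cons hys'.symm (Walk.cons hyt Walk.nil),
              Walk.cons hsx (Walk.cons ht'x.symm Walk.nil), rfl, by norm_num, by norm_num⟩
          · exact ⟨Walk.cons hs'x (Walk.cons htx.symm Walk.nil),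
              Walk.cons hys.symm (Walk.cons hyt' Walk.nil), rfl, by norm_num, by norm_num⟩
          · exact ⟨Walk.cons hys'.symm (Walk.cons hxy.symm (Walk.cons htx.symm Walk.nil)),
              Walk.cons hys.symm (Walk.cons hxy.symm (Walk.cons ht'x.symm Walk.nil)), rfl, by norm_num, by norm_num⟩
        obtain ⟨c₁, c₂, hδeq, hδ2, hδ3⟩ := conns
        -- Walk W₁ := w₃ ++ c₁ : closed at t, entirely inside G
        by_cases ho₁ : Odd ((w₃.transfer G hall₃').append c₁).length
        · refine ⟨t, (w₃.transfer G hall₃').append c₁, ho₁, ?_⟩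
          have : ((w₃.transfer G hall₃').append c₁).length = w₃.length + c₁.length := by
            simp [Walk.length_append, Walk.length_transfer]
          omega
        · -- Walk W₂ := (w₄ ++ w₁) ++ c₂ : closed at t', with at least two fewer new edges
          obtain ⟨c₂', hc₂len, hc₂edges⟩ := liftWalk hle c₂
          set W₂ : G'.Walk t' t' := (w₄.append w₁).append c₂' with hW₂
          have hW₂len : W₂.length = w₄.length + w₁.length + c₂.length := by
            simp [hW₂, Walk.length_append, hc₂len]
          have hW₂filter : (W₂.edges.filter (fun e => e ∉ G.edgeSet)).length ≤ N := by
            have hw₁nil : (w₁.edges.filter (fun e => e ∉ G.edgeSet)) = [] := by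
              rw [List.filter_eq_nil_iff]
              intro e he; simpa using hall₁' e he
            have hc₂nil : (c₂'.edges.filter (fun e => e ∉ G.edgeSet)) = [] := by
              rw [List.filter_eq_nil_iff]
              intro e he; simpa using hc₂edges e he
            have hcount : (w.edges.filter (fun e => e ∉ G.edgeSet)).length
                = (w₄.edges.filter (fun e => e ∉ G.edgeSet)).length + 2 := by
              rw [heq, heq₂]
              simp only [Walk.edges_append, Walk.edges_cons, List.filter_append,
                List.filter_cons, List.length_append]
              rw [if_pos (by simpa using hP₁), if_pos (by simpa using hP₂), hw₁nil]
              have hw₃nil : (w₃.edges.filter (fun e => e ∉ G.edgeSet)) = [] := by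
                rw [List.filter_eq_nil_iff]
                intro e he; simpa using hall₃' e he
              rw [hw₃nil]
              simp
            have : (W₂.edges.filter (fun e => e ∉ G.edgeSet)).length
                = (w₄.edges.filter (fun e => e ∉ G.edgeSet)).length := by
              rw [hW₂]
              simp only [Walk.edges_append, List.filter_append, List.length_append,
                hw₁nil, hc₂nil]
              simp
            omega
          have hW₂odd : Odd W₂.length := by
            have h₁len : ((w₃.transfer G hall₃').append c₁).length = w₃.length + c₁.length := by
              simp [Walk.length_append, Walk.length_transfer]
            rw [Nat.odd_iff] at hodd ⊢
            rw [Nat.odd_iff, h₁len] at ho₁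
            omega
          obtain ⟨q, w', ho', hb⟩ := ih W₂ hW₂filter hW₂odd
          refine ⟨q, w', ho', ?_⟩
          have hWn : W₂.length ≤ w.length := by
            rw [Nat.odd_iff] at hodd hW₂odd
            omega
          omega

end OddGirthAux


/-- Let `G` have odd-girth at least `2k+1` (`k ≥ 2`), `{x,y}` an edge of `G`, and let `G'`
add to `G` all edges `{u,v}` such that `G` contains a path `u,x,y,v` or `u,y,x,v`.  Then
`G'` has no odd cycle `C` of length `2ℓ-1` with `ℓ ≤ k-1` containing two distinct edges
`{a,b}`, `{a',b'} ∈ E(G') \ E(G)` realized by paths `a,x,y,b` and `a',y,x,b'` in `G`. -/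
theorem no_cycle_with_two_new_edges {V : Type*} [Fintype V] (G : SimpleGraph V) (k : ℕ)
    (hk : 2 ≤ k)
    (hgirth : ∀ (u : V) (c : G.Walk u u), c.IsCycle → Odd c.length → 2 * k + 1 ≤ c.length)
    (x y : V) (hxy : G.Adj x y)
    (G' : SimpleGraph V)
    (hG' : G' = G ⊔ SimpleGraph.fromRel (fun u v => G.Adj u x ∧ G.Adj y v))
    (ℓ : ℕ) (hℓ1 : 1 ≤ ℓ) (hℓ : ℓ ≤ k - 1)
    (u : V) (c : G'.Walk u u) (hc : c.IsCycle) (hlen : c.length = 2 * ℓ - 1)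
    (a b a' b' : V)
    (he1 : s(a, b) ∈ c.edges) (he2 : s(a', b') ∈ c.edges)
    (hne : s(a, b) ≠ s(a', b'))
    (hn1 : s(a, b) ∉ G.edgeSet) (hn2 : s(a', b') ∉ G.edgeSet)
    (hp1 : G.Adj a x ∧ G.Adj y b) (hp2 : G.Adj a' y ∧ G.Adj x b') :
    False := by
  subst hG'
  have hle : G ≤ G ⊔ SimpleGraph.fromRel (fun u v => G.Adj u x ∧ G.Adj y v) := le_sup_left
  have hnew : ∀ s t : V,
      (G ⊔ SimpleGraph.fromRel (fun u v => G.Adj u x ∧ G.Adj y v)).Adj s t →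
      s(s, t) ∉ G.edgeSet →
      (G.Adj s x ∧ G.Adj y t) ∨ (G.Adj t x ∧ G.Adj y s) := by
    intro s t hst hnotin
    rw [SimpleGraph.sup_adj, SimpleGraph.fromRel_adj] at hst
    rw [SimpleGraph.mem_edgeSet] at hnotin
    tauto
  have hodd : Odd c.length := by
    rw [hlen, Nat.odd_iff]; omega
  obtain ⟨q, w', ho', hb⟩ := OddGirthAux.to_odd_G_walk hxy hle hnew
    ((c.edges.filter (fun e => e ∉ G.edgeSet)).length) c le_rfl hodd
  obtain ⟨u', cyc, hcyc, hcodd, hclen⟩ := OddGirthAux.exists_odd_cycle w'.length w' le_rfl ho'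
  have hg := hgirth u' cyc hcyc hcodd
  omega
end

section
/- Let G be a graph with odd-girth(G) ≥ 2k+1, let 1 ≤ s ≤ k-1 and fix edges e_1,...,e_s of G. Define G_s by adding, for each pair of distinct vertices u,v, the edge {u,v} whenever u and v are even-connected with respect to e_1⋯e_s. Then G_s contains no odd cycle of length at most 2(k-s)-1. -/
theorem List.coe_take_add_coe_drop_le {α : Type*} {l : List α} {s : Multiset α} {t : ℕ}
    (ht : t < l.length) (h : (l : Multiset α) ≤ l[t] ::ₘ s) :
    (l.take t : Multiset α) + l.drop (t + 1) ≤ s := by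
  have hl : (l : Multiset α) = l[t] ::ₘ (↑(l.take t) + ↑(l.drop (t + 1))) := by
    rw [Multiset.coe_add, Multiset.cons_coe, Multiset.coe_eq_coe]
    conv_lhs => rw [← List.take_append_drop t l, List.drop_eq_getElem_cons ht]
    exact List.perm_middle
  rwa [hl, Multiset.cons_le_cons_iff] at h

namespace SimpleGraph

variable {V : Type*} {G H : SimpleGraph V} {m n : ℕ}

/-- Stated for closed walks; every odd closed walk contains an odd cycle no longer than it
(`Walk.exists_isCycle_odd_length_le`). -/
def OddGirthAtLeast (G : SimpleGraph V) (n : ℕ) : Prop :=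
  ∀ ⦃u : V⦄ (c : G.Walk u u), Odd c.length → n ≤ c.length

theorem Walk.exists_isCycle_odd_length_le {u : V} (c : G.Walk u u) (hc : Odd c.length) :
    ∃ (v : V) (c' : G.Walk v v), c'.IsCycle ∧ Odd c'.length ∧ c'.length ≤ c.length := by
  induction hn : c.length using Nat.strong_induction_on generalizing u with
  | _ n ih =>
  cases c with
  | nil => simp at hc
  | @cons _ y _ h r =>
    by_cases hr : r.IsPath
    · by_cases he : s(u, y) ∈ r.edges
      · have hr1 := hr.length_eq_one_of_mem_edges (by rwa [Sym2.eq_swap])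
        rw [length_cons, hr1] at hc
        exact absurd hc (by decide)
      · exact ⟨u, _, (cons_isCycle_iff r h).2 ⟨hr, he⟩, hc, hn.le⟩
    · obtain ⟨w, d, ⟨r₁, r₂, rfl⟩, hd⟩ :
          ∃ (w : V) (d : G.Walk w w), d.IsSubwalk r ∧ ¬d.Nil := by
        simpa [isPath_iff_isSubwalk_imp_nil] using hr
      rw [not_nil_iff_lt_length] at hd
      set c' := cons h (r₁.append r₂)
      have hsum : c'.length + d.length = n := by simp [c', ← hn]; omega
      have hodd : Odd c'.length ∨ Odd d.length := by
        rw [hn, ← hsum] at hc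
        rcases Nat.even_or_odd d.length with hde | hdo
        exacts [.inl (Nat.odd_add.1 hc |>.2 hde), .inr hdo]
      rcases hodd with hodd | hodd
      · obtain ⟨v, c'', hcyc, hodd', hle⟩ := ih _ (by omega) c' hodd rfl
        exact ⟨v, c'', hcyc, hodd', by omega⟩
      · obtain ⟨v, c'', hcyc, hodd', hle⟩ := ih _ (by simp [c'] at hsum; omega) d hodd rfl
        exact ⟨v, c'', hcyc, hodd', by omega⟩

theorem oddGirthAtLeast_of_forall_isCycle
    (h : ∀ (u : V) (c : G.Walk u u), c.IsCycle → Odd c.length → n ≤ c.length) :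
    G.OddGirthAtLeast n := fun _ c hc ↦
  let ⟨v, c', hcyc, hodd, hle⟩ := c.exists_isCycle_odd_length_le hc
  (h v c' hcyc hodd).trans hle

namespace OddGirthAtLeast

theorem mono (hG : G.OddGirthAtLeast n) (hmn : m ≤ n) : G.OddGirthAtLeast m :=
  fun _ c hc ↦ hmn.trans (hG c hc)

theorem anti (hGH : G ≤ H) (hH : H.OddGirthAtLeast n) : G.OddGirthAtLeast n :=
  fun _ c hc ↦ by simpa using hH (c.mapLe hGH) (by simpa using hc)

theorem ne_of_walk (hG : G.OddGirthAtLeast n) {u v : V} (p : G.Walk u v)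
    (hodd : Odd p.length) (hlt : p.length < n) : u ≠ v := by
  rintro rfl
  exact hlt.not_ge (hG p hodd)

end OddGirthAtLeast

def shortcut (H : SimpleGraph V) (e : Sym2 V) : SimpleGraph V :=
  H ⊔ fromRel fun u v ↦ ∃ x y, s(x, y) = e ∧ H.Adj u x ∧ H.Adj y v

theorem le_shortcut (H : SimpleGraph V) (e : Sym2 V) : H ≤ H.shortcut e := le_sup_left

theorem shortcut_adj_of_adj_of_adj {u v x y : V} (hux : H.Adj u x) (hyv : H.Adj y v)
    (huv : u ≠ v) : (H.shortcut s(x, y)).Adj u v :=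
  Or.inr ⟨huv, Or.inl ⟨x, y, rfl, hux, hyv⟩⟩

theorem exists_walks_of_shortcut_adj {a b x y : V} (hab : H.Adj a b)
    (h : (H.shortcut s(a, b)).Adj x y) :
    H.Adj x y ∨ ∃ (P : H.Walk x a) (R : H.Walk a y),
      0 < P.length ∧ 0 < R.length ∧ P.length + R.length = 3 := by
  have key : ∀ {p q : V}, s(p, q) = s(a, b) → H.Adj x p → H.Adj q y →
      ∃ (P : H.Walk x a) (R : H.Walk a y),
        0 < P.length ∧ 0 < R.length ∧ P.length + R.length = 3 := by
    intro p q hpq hxp hqy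
    rcases Sym2.eq_iff.1 hpq with ⟨rfl, rfl⟩ | ⟨rfl, rfl⟩
    · exact ⟨hxp.toWalk, .cons hab hqy.toWalk, by simp, by simp, by simp⟩
    · exact ⟨.cons hxp hab.symm.toWalk, hqy.toWalk, by simp, by simp, by simp⟩
  rcases h with h | ⟨-, ⟨p, q, hpq, hxp, hqy⟩ | ⟨p, q, hpq, hyp, hqx⟩⟩
  · exact .inl h
  · exact .inr (key hpq hxp hqy)
  · exact .inr (key (q := p) (by rw [Sym2.eq_swap, hpq]) hqx.symm hyp.symm)

/-- A new edge `x ~ x'` is a walk `x ⇝ a ⇝ x'` of length three in `H`; at the next new edge, the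
detour through `a` between the two is a closed walk of `H` too short to be odd. -/
theorem Walk.exists_walk_of_shortcut {a b : V} (hab : H.Adj a b) {N : ℕ}
    (hH : H.OddGirthAtLeast N) {x y : V} (w : (H.shortcut s(a, b)).Walk x y)
    (hw : w.length + 3 ≤ N) :
    (∃ W : H.Walk x y, W.length = w.length) ∨
      ∃ (P : H.Walk x a) (Q : H.Walk a y), P.length ≤ w.length + 1 ∧
        P.length + Q.length ≤ w.length + 2 ∧ (P.length + Q.length) % 2 = w.length % 2 := by
  induction w with
  | nil => exact .inl ⟨.nil, rfl⟩
  | cons h w ih =>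
    simp only [length_cons] at hw ⊢
    rcases ih (by omega) with ⟨W, hW⟩ | ⟨P₁, Q₁, hP₁, hsum, hpar⟩ <;>
      rcases exists_walks_of_shortcut_adj hab h with h | ⟨P, R, hP, hR, hPR⟩
    · exact .inl ⟨.cons h W, by simp [hW]⟩
    · exact .inr ⟨P, R.append W, by omega, by simp; omega, by simp; omega⟩
    · exact .inr ⟨.cons h P₁, Q₁, by simp; omega, by simp; omega, by simp; omega⟩
    · have hRP : (R.append P₁).length % 2 = 0 := by
        by_contra hodd
        have := hH (R.append P₁) (Nat.odd_iff.2 (by omega))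
        simp only [length_append] at this
        omega
      simp only [length_append] at hRP
      exact .inr ⟨P, Q₁, by omega, by omega, by omega⟩

theorem OddGirthAtLeast.shortcut {e : Sym2 V} (he : e ∈ H.edgeSet)
    (hH : H.OddGirthAtLeast (n + 2)) : (H.shortcut e).OddGirthAtLeast n := by
  induction e using Sym2.ind with
  | _ a b =>
  intro u c hc
  by_contra! hlt
  rcases c.exists_walk_of_shortcut he hH (by omega) with ⟨W, hW⟩ | ⟨P, Q, -, hsum, hpar⟩
  · have := hH W (hW ▸ hc)
    omega
  · have := hH (Q.append P) (by rw [Nat.odd_iff] at hc ⊢; simp only [Walk.length_append]; omega)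
    simp only [Walk.length_append] at this
    omega

/-- The graph `G_s` of the paper, with the edges of `es` added from last to first. -/
def shortcuts (H : SimpleGraph V) : List (Sym2 V) → SimpleGraph V
  | [] => H
  | e :: es => (H.shortcuts es).shortcut e

theorem le_shortcuts (H : SimpleGraph V) : ∀ es : List (Sym2 V), H ≤ H.shortcuts es
  | [] => le_rfl
  | e :: es => (le_shortcuts H es).trans (le_shortcut _ e)

theorem OddGirthAtLeast.shortcuts {es : List (Sym2 V)} (hes : ∀ e ∈ es, e ∈ H.edgeSet)
    (hH : H.OddGirthAtLeast (n + 2 * es.length)) : (H.shortcuts es).OddGirthAtLeast n := by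
  induction es generalizing n with
  | nil => exact hH
  | cons e es ih =>
    simp only [List.mem_cons, forall_eq_or_imp, List.length_cons] at hes hH
    exact (ih hes.2 (n := n + 2) (hH.mono (by omega))).shortcut
      (edgeSet_mono (le_shortcuts H es) hes.1)

def Walk.oddEdges {u v : V} (p : G.Walk u v) (l : ℕ) : List (Sym2 V) :=
  List.ofFn fun t : Fin l ↦ s(p.getVert (2 * ↑t + 1), p.getVert (2 * ↑t + 2))

@[simp]
theorem Walk.length_oddEdges {u v : V} (p : G.Walk u v) (l : ℕ) : (p.oddEdges l).length = l := by
  simp [oddEdges]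

@[simp]
theorem Walk.getElem_oddEdges {u v : V} (p : G.Walk u v) {l t : ℕ}
    (ht : t < (p.oddEdges l).length) :
    (p.oddEdges l)[t] = s(p.getVert (2 * t + 1), p.getVert (2 * t + 2)) := by
  simp [oddEdges]

theorem Walk.oddEdges_take {u v : V} (p : G.Walk u v) {t l : ℕ} (htl : t ≤ l) :
    (p.take (2 * t + 1)).oddEdges t = (p.oddEdges l).take t := by
  apply List.ext_getElem
  · simp [oddEdges, htl]
  · intro i _ _
    simp [oddEdges]

theorem Walk.oddEdges_drop {u v : V} (p : G.Walk u v) (t l : ℕ) :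
    (p.drop (2 * t + 2)).oddEdges (l - (t + 1)) = (p.oddEdges l).drop (t + 1) := by
  apply List.ext_getElem
  · simp [oddEdges]
  · intro i _ _
    simp [oddEdges]
    exact .inl ⟨by congr 1; ring, by congr 1; ring⟩

theorem adj_shortcuts_of_walk {es : List (Sym2 V)}
    (hG : G.OddGirthAtLeast (2 * es.length + 1)) {u v : V} (huv : u ≠ v) (p : G.Walk u v)
    (l : ℕ) (hlen : p.length = 2 * l + 1) (hle : (p.oddEdges l : Multiset (Sym2 V)) ≤ es) :
    (G.shortcuts es).Adj u v := by
  induction es generalizing u v l with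
  | nil =>
    have hl : l = 0 := by simpa using Multiset.card_le_card hle
    exact p.adj_of_length_eq_one (by omega)
  | cons e es ih =>
    have hG' : G.OddGirthAtLeast (2 * es.length + 3) := by simpa [Nat.mul_add] using hG
    rw [← Multiset.cons_coe] at hle
    by_cases he : e ∈ p.oddEdges l
    · obtain ⟨t, ht, rfl⟩ := List.getElem_of_mem he
      have hsplit := List.coe_take_add_coe_drop_le ht hle
      have htl : t < l := by simpa using ht
      have hcard := Multiset.card_le_card hsplit
      simp only [Multiset.card_add, Multiset.coe_card, List.length_take, List.length_drop,
        Walk.length_oddEdges, min_eq_left htl.le] at hcard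
      have hPlen : (p.take (2 * t + 1)).length = 2 * t + 1 := by simp; omega
      have hSlen : (p.drop (2 * t + 2)).length = 2 * (l - (t + 1)) + 1 := by simp; omega
      have hux : (G.shortcuts es).Adj u (p.getVert (2 * t + 1)) := by
        refine ih (hG'.mono (by omega)) ?_ (p.take (2 * t + 1)) t hPlen ?_
        · exact hG'.ne_of_walk _ (hPlen ▸ odd_two_mul_add_one t) (by omega)
        · rw [p.oddEdges_take htl.le]
          exact (Multiset.le_add_right _ _).trans hsplit
      have hyv : (G.shortcuts es).Adj (p.getVert (2 * t + 2)) v := by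
        refine ih (hG'.mono (by omega)) ?_ (p.drop (2 * t + 2)) (l - (t + 1)) hSlen ?_
        · exact hG'.ne_of_walk _ (hSlen ▸ odd_two_mul_add_one _) (by omega)
        · rw [p.oddEdges_drop]
          exact (Multiset.le_add_left _ _).trans hsplit
      rw [Walk.getElem_oddEdges]
      exact shortcut_adj_of_adj_of_adj hux hyv huv
    · exact le_shortcut _ e
        (ih (hG'.mono (by omega)) huv p l hlen ((Multiset.le_cons_of_notMem he).1 hle))

end SimpleGraph

open SimpleGraph

theorem EvenConnected.adj_shortcuts {V : Type*} {G : SimpleGraph V} {es : List (Sym2 V)}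
    {u v : V} (h : EvenConnected G es u v) (hG : G.OddGirthAtLeast (2 * es.length + 1))
    (huv : u ≠ v) : (G.shortcuts es).Adj u v :=
  let ⟨p, l, _, hlen, hle⟩ := h
  adj_shortcuts_of_walk hG huv p l hlen hle

theorem oddGirth_of_evenConnection_graph_general {V : Type*} (G : SimpleGraph V)
    (k : ℕ)
    (hgirth : ∀ (u : V) (c : G.Walk u u), c.IsCycle → Odd c.length → 2 * k + 1 ≤ c.length)
    (es : List (Sym2 V)) (hes : ∀ e ∈ es, e ∈ G.edgeSet)
    (hsk : es.length ≤ k - 1)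
    (Gs : SimpleGraph V)
    (hGs : Gs = G ⊔ SimpleGraph.fromRel (fun u v => EvenConnected G es u v)) :
    ∀ (u : V) (c : Gs.Walk u u), c.IsCycle → Odd c.length →
      2 * (k - es.length) + 1 ≤ c.length := by
  have hG : G.OddGirthAtLeast (2 * k + 1) := oddGirthAtLeast_of_forall_isCycle hgirth
  have hGs_le : Gs ≤ G.shortcuts es := by
    rw [hGs]
    refine sup_le (le_shortcuts G es) fun u v ⟨huv, h⟩ ↦ ?_
    have hG' := hG.mono (m := 2 * es.length + 1) (by omega)
    rcases h with h | h
    · exact h.adj_shortcuts hG' huv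
    · exact (h.adj_shortcuts hG' huv.symm).symm
  have hGs_girth : Gs.OddGirthAtLeast (2 * (k - es.length) + 1) :=
    ((hG.mono (by omega)).shortcuts hes).anti hGs_le
  exact fun _ c _ hodd ↦ hGs_girth c hodd

/-- Let `G` have odd-girth at least `2k+1`, let `1 ≤ s ≤ k-1` and fix edges
`e₁, …, e_s` of `G`.  Let `G_s` be obtained from `G` by adding, for each pair of
distinct vertices `u, v` that are even-connected with respect to `e₁ ⋯ e_s`, the edge
`{u,v}`.  Then `G_s` contains no odd cycle of length at most `2(k-s)-1`. -/
theorem oddGirth_of_evenConnection_graph {V : Type*} [Fintype V] (G : SimpleGraph V)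
    (k : ℕ) (hk : 2 ≤ k)
    (hgirth : ∀ (u : V) (c : G.Walk u u), c.IsCycle → Odd c.length → 2 * k + 1 ≤ c.length)
    (es : List (Sym2 V)) (hes : ∀ e ∈ es, e ∈ G.edgeSet)
    (hs1 : 1 ≤ es.length) (hsk : es.length ≤ k - 1)
    (Gs : SimpleGraph V)
    (hGs : Gs = G ⊔ SimpleGraph.fromRel (fun u v => EvenConnected G es u v)) :
    ∀ (u : V) (c : Gs.Walk u u), c.IsCycle → Odd c.length →
      2 * (k - es.length) + 1 ≤ c.length :=
  oddGirth_of_evenConnection_graph_general G k hgirth es hes hsk Gs hGs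
end

section
/- Let G be a very well-covered graph (every maximal independent set has size |V(G)|/2) with odd-girth(G) ≥ 2k+1, k ≥ 3, and let e_1,...,e_s be edges of G with 1 ≤ s ≤ k-2. Let G' be the graph on V(G) whose edges are E(G) together with all pairs {u,v} of distinct vertices that are even-connected with respect to e_1⋯e_s. Then G' is very well-covered. -/
/-!
A graph without isolated vertices is very well-covered iff it has a perfect matching `M` such
that every path `a - x - M x - b` closes up to an edge `a - b` (Favaron). For `G` such a matching
exists: Berge's inequality `|I| ≤ |N(I)|` for independent sets of a well-covered graph feeds Hall's
theorem, and the closing property holds because a maximal independent set contains one end of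
every matching edge. The same `M` works for `G'`. A `G'`-edge is an alternating walk whose odd
steps are `G`-edges and whose even steps are edges among `e₁, …, e_s`; two such walks ending in `x`
and in `M x` glue, through a closing edge of `G`, to an alternating walk between their starting
points, and the odd-girth bound shows that the ends of an alternating walk are adjacent in `G'`.
-/

theorem List.exists_eq_append_cons_append_cons_of_not_nodup_map {α β : Type*} {f : α → β}
    {L : List α} (h : ¬ (L.map f).Nodup) :
    ∃ L₁ z₁ L₂ z₂ L₃, L = L₁ ++ z₁ :: (L₂ ++ z₂ :: L₃) ∧ f z₁ = f z₂ := by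
  induction L with
  | nil => simp at h
  | cons z L ih =>
    rw [List.map_cons, List.nodup_cons, not_and_or, not_not] at h
    rcases h with h | h
    · obtain ⟨z₂, hz₂, hf⟩ := List.mem_map.mp h
      obtain ⟨L₂, L₃, rfl⟩ := List.append_of_mem hz₂
      exact ⟨[], z, L₂, z₂, L₃, rfl, hf.symm⟩
    · obtain ⟨L₁, z₁, L₂, z₂, L₃, rfl, hf⟩ := ih h
      exact ⟨z :: L₁, z₁, L₂, z₂, L₃, rfl, hf⟩

namespace SimpleGraph

variable {V : Type*} {G : SimpleGraph V}

def nbhd (G : SimpleGraph V) (s : Set V) : Set V := {v | ∃ u ∈ s, G.Adj u v}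

def IsWellCovered [Fintype V] (G : SimpleGraph V) (q : ℕ) : Prop :=
  ∀ s : Set V, Maximal (IsIndepSet' G) s → s.ncard = q

lemma exists_adj_of_maximal {W : Set V} (hW : Maximal (IsIndepSet' G) W) {v : V} (hv : v ∉ W) :
    ∃ w ∈ W, G.Adj v w := by
  by_contra! h
  refine hv (hW.mem_of_prop_insert ?_)
  exact Set.pairwise_insert.mpr ⟨hW.prop, fun w hw _ => ⟨h w hw, fun hwv => h w hw hwv.symm⟩⟩

lemma _root_.Equiv.exists_involutive_extension {S : Set V} (e : S ≃ ↥Sᶜ) :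
    ∃ M : V → V, Function.Involutive M ∧ ∀ x : S, M x = e x := by
  classical
  refine ⟨fun v => if h : v ∈ S then e ⟨v, h⟩ else e.symm ⟨v, h⟩, fun v => ?_,
    fun x => dif_pos x.2⟩
  by_cases h : v ∈ S
  · have hS' : (e ⟨v, h⟩ : V) ∉ S := (e ⟨v, h⟩).2
    simp [h, hS']
  · have hS' : (e.symm ⟨v, h⟩ : V) ∈ S := (e.symm ⟨v, h⟩).2
    simp [h, hS']

section WellCovered

variable [Fintype V] {q : ℕ}

lemma IsWellCovered.ncard_le (hG : G.IsWellCovered q) {s : Set V} (hs : IsIndepSet' G s) :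
    s.ncard ≤ q := by
  obtain ⟨W, hsW, hW⟩ := _root_.Finite.exists_le_maximal hs
  exact hG W hW ▸ Set.ncard_le_ncard hsW

lemma IsWellCovered.ncard_diff_le (hG : G.IsWellCovered q) {I W : Set V}
    (hI : IsIndepSet' G I) (hW : Maximal (IsIndepSet' G) W) :
    (I \ W).ncard ≤ (W ∩ G.nbhd I).ncard := by
  set Y := W \ (I ∪ G.nbhd I)
  have hIY : IsIndepSet' G (I ∪ Y) := by
    refine Set.pairwise_union.mpr ⟨hI, hW.prop.mono Set.sdiff_subset, fun i hi y hy _ => ?_⟩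
    exact ⟨fun h => hy.2 (Or.inr ⟨i, hi, h⟩), fun h => hy.2 (Or.inr ⟨i, hi, h.symm⟩)⟩
  have hdisj : Disjoint I Y := Set.disjoint_left.mpr fun i hi hy => hy.2 (Or.inl hi)
  have hWsplit : W ⊆ (W ∩ I) ∪ (W ∩ G.nbhd I) ∪ Y := fun w hw => by
    by_cases hwI : w ∈ I
    · exact Or.inl (Or.inl ⟨hw, hwI⟩)
    by_cases hwN : w ∈ G.nbhd I
    · exact Or.inl (Or.inr ⟨hw, hwN⟩)
    · exact Or.inr ⟨hw, by rintro (h | h) <;> contradiction⟩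
  have hIY_le := hG.ncard_le hIY
  rw [Set.ncard_union_eq hdisj] at hIY_le
  have hW_le := (Set.ncard_le_ncard hWsplit).trans
    ((Set.ncard_union_le _ _).trans (Nat.add_le_add_right (Set.ncard_union_le _ _) _))
  have hI_split := Set.ncard_inter_add_ncard_sdiff_eq_ncard I W
  rw [Set.inter_comm] at hI_split
  have := hG W hW
  omega

/-- Berge's inequality. A maximal independent set `W` through a neighbour of some `i ∈ I` splits
`I` into `I ∩ W`, handled by induction, and `I \ W`, which `ncard_diff_le` bounds by the part
`W ∩ N(I)` of the neighbourhood of `I` that `N(I ∩ W)` misses. -/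
lemma IsWellCovered.ncard_le_ncard_nbhd (hG : G.IsWellCovered q) (hiso : ∀ v, ∃ w, G.Adj v w)
    {I : Set V} (hI : IsIndepSet' G I) : I.ncard ≤ (G.nbhd I).ncard := by
  induction h : I.ncard using Nat.strong_induction_on generalizing I with
  | _ n ih =>
  obtain rfl | ⟨i, hi⟩ := I.eq_empty_or_nonempty
  · simp [← h]
  obtain ⟨d, hid⟩ := hiso i
  obtain ⟨W, hdW, hW⟩ := _root_.Finite.exists_le_maximal (p := IsIndepSet' G)
    (Set.pairwise_singleton d _)
  have hiW : i ∉ W := fun hiW => hW.prop hiW (hdW rfl) hid.ne hid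
  have hlt : (I ∩ W).ncard < n :=
    h ▸ Set.ncard_lt_ncard ⟨Set.inter_subset_left, fun hsub => hiW (hsub hi).2⟩
  have hIH := ih _ hlt (hI.mono Set.inter_subset_left) rfl
  have hdisj : Disjoint (G.nbhd (I ∩ W)) (W ∩ G.nbhd I) := by
    refine Set.disjoint_left.mpr fun v ⟨w, hw, hwv⟩ hv => hW.prop hw.2 hv.1 hwv.ne hwv
  have hsub : G.nbhd (I ∩ W) ∪ (W ∩ G.nbhd I) ⊆ G.nbhd I := by
    rintro v (⟨w, hw, hwv⟩ | hv)
    exacts [⟨w, hw.1, hwv⟩, hv.2]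
  have := Set.ncard_le_ncard hsub
  rw [Set.ncard_union_eq hdisj] at this
  have := hG.ncard_diff_le hI hW
  have := Set.ncard_inter_add_ncard_sdiff_eq_ncard I W
  omega

/-- Hall's theorem matches a maximal independent set `S` into its complement, which has at most
`|S|` vertices; the matching and its inverse make up `M`. -/
lemma IsWellCovered.exists_involutive_adj (hG : G.IsWellCovered q) (hiso : ∀ v, ∃ w, G.Adj v w)
    (hcard : Fintype.card V ≤ 2 * q) :
    ∃ M : V → V, Function.Involutive M ∧ ∀ v, G.Adj v (M v) := by
  classical
  obtain ⟨S, -, hS⟩ :=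
    _root_.Finite.exists_le_maximal (p := IsIndepSet' G) (Set.pairwise_empty _)
  have hall :
      ∀ A : Finset S, A.card ≤ (Finset.univ.filter fun v => ∃ a ∈ A, G.Adj a v).card := by
    intro A
    have hA : IsIndepSet' G (Subtype.val '' (A : Set S)) := hS.prop.mono (by simp)
    have hnbhd : G.nbhd (Subtype.val '' (A : Set S)) =
        ↑(Finset.univ.filter fun v => ∃ a ∈ A, G.Adj a v) := by
      ext v; simp [nbhd]
    have := hG.ncard_le_ncard_nbhd hiso hA
    rwa [hnbhd, Set.ncard_coe_finset, Set.ncard_image_of_injective _ Subtype.val_injective,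
      Set.ncard_coe_finset] at this
  obtain ⟨f, hf_inj, hf_adj⟩ :=
    (Fintype.all_card_le_filter_rel_iff_exists_injective fun (x : S) v => G.Adj x v).mp hall
  have hfS : ∀ x, f x ∉ S := fun x hx => hS.prop x.2 hx (hf_adj x).ne (hf_adj x)
  have hbij : Function.Bijective fun x => (⟨f x, hfS x⟩ : ↥Sᶜ) := by
    refine Function.Injective.bijective_of_nat_card_le
      (fun x y h => hf_inj (congrArg Subtype.val h)) ?_
    have := Set.ncard_add_ncard_compl S
    rw [Nat.card_coe_set_eq, Nat.card_coe_set_eq, hG S hS]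
    rw [hG S hS, Nat.card_eq_fintype_card] at this
    omega
  obtain ⟨M, hM, hMf⟩ := (Equiv.ofBijective _ hbij).exists_involutive_extension
  refine ⟨M, hM, fun v => ?_⟩
  by_cases hv : v ∈ S
  · exact hMf ⟨v, hv⟩ ▸ hf_adj ⟨v, hv⟩
  · obtain ⟨x, hx⟩ := hbij.2 ⟨v, hv⟩
    have hMx : M x = v := (hMf x).trans (congrArg Subtype.val hx)
    have hxM : G.Adj x (M x) := hMf x ▸ hf_adj x
    rw [← hMx, hM x]
    exact hxM.symm

end WellCovered

/-- Favaron's property of a perfect matching `M`: every path `a - x - M x - b` closes up to an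
edge `a - b`. Taking `a = b` shows that no triangle contains a matching edge. -/
def MatchingClosesPaths (G : SimpleGraph V) (M : V → V) : Prop :=
  ∀ x a b, G.Adj a x → G.Adj b (M x) → G.Adj a b

section PerfectMatching

variable [Fintype V] {M : V → V}

lemma two_mul_ncard_eq_card_iff (hM : Function.Involutive M) (hGM : ∀ v, G.Adj v (M v))
    {J : Set V} (hJ : IsIndepSet' G J) :
    2 * J.ncard = Fintype.card V ↔ ∀ x, x ∈ J ∨ M x ∈ J := by
  have hdisj : Disjoint J (M ⁻¹' J) :=
    Set.disjoint_left.mpr fun x hx hMx => hJ hx hMx (hGM x).ne (hGM x)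
  have hcard : (M ⁻¹' J).ncard = J.ncard :=
    Set.ncard_preimage_of_injective_subset_range hM.injective (by simp [hM.surjective.range_eq])
  have hunion : (J ∪ M ⁻¹' J).ncard = 2 * J.ncard := by
    rw [Set.ncard_union_eq hdisj, hcard, two_mul]
  rw [← hunion, ← Nat.card_eq_fintype_card, ← Set.eq_univ_iff_ncard, Set.eq_univ_iff_forall]
  rfl

lemma _root_.VeryWellCovered.matchingClosesPaths (hG : VeryWellCovered G)
    (heven : Even (Fintype.card V)) (hM : Function.Involutive M) (hGM : ∀ v, G.Adj v (M v)) :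
    G.MatchingClosesPaths M := by
  intro x a b hax hbx
  by_contra hab
  have hJ : IsIndepSet' G {a, b} := Set.pairwise_insert.mpr
    ⟨Set.pairwise_singleton _ _, fun _ hb _ => hb ▸ ⟨hab, fun h => hab h.symm⟩⟩
  obtain ⟨W, hsub, hW⟩ := _root_.Finite.exists_le_maximal hJ
  have hWcard : 2 * W.ncard = Fintype.card V := by
    rw [hG W hW]
    exact Nat.two_mul_div_two_of_even heven
  rcases (two_mul_ncard_eq_card_iff hM hGM hW.prop).mp hWcard x with hx | hx
  · exact hW.prop (hsub (.inl rfl)) hx hax.ne hax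
  · exact hW.prop (hsub (.inr rfl)) hx hbx.ne hbx

lemma veryWellCovered_of_matchingClosesPaths (hM : Function.Involutive M)
    (hGM : ∀ v, G.Adj v (M v)) (hP : G.MatchingClosesPaths M) : VeryWellCovered G := by
  intro S hS
  have hcover : ∀ x, x ∈ S ∨ M x ∈ S := by
    intro x
    by_contra! h
    obtain ⟨a, ha, hax⟩ := exists_adj_of_maximal hS h.1
    obtain ⟨b, hb, hbx⟩ := exists_adj_of_maximal hS h.2
    have hab := hP x a b hax.symm hbx.symm
    exact hS.prop ha hb hab.ne hab
  have := (two_mul_ncard_eq_card_iff hM hGM hS.prop).mpr hcover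
  omega

end PerfectMatching

theorem Walk.exists_isCycle_odd_length_le_s17 {u : V} (w : G.Walk u u) (hw : Odd w.length) :
    ∃ (x : V) (c : G.Walk x x), c.IsCycle ∧ Odd c.length ∧ c.length ≤ w.length := by
  induction hn : w.length using Nat.strong_induction_on generalizing u w with
  | _ n ih =>
  by_cases hcyc : w.IsCycle
  · exact ⟨u, w, hcyc, hw, hn.le⟩
  cases w with
  | nil => simp at hw
  | cons hadj p =>
    simp only [isCycle_iff_isPath_tail_and_le_length, tail_cons, length_cons, not_and] at hcyc
    rw [length_cons] at hw hn
    by_cases hp : p.IsPath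
    · have := hcyc ((isPath_copy _ _ _).mpr hp)
      obtain rfl := p.eq_of_length_eq_zero (by rw [Nat.odd_iff] at hw; omega)
      exact (G.irrefl hadj).elim
    obtain ⟨x, c, ⟨r₁, r₂, rfl⟩, hc⟩ :
        ∃ (x : V) (c : G.Walk x x), c.IsSubwalk p ∧ ¬ c.Nil := by
      simpa [isPath_iff_isSubwalk_imp_nil] using hp
    have hc0 : 0 < c.length := not_nil_iff_lt_length.mp hc
    simp only [length_append] at hw hn
    rcases Nat.even_or_odd c.length with heven | hodd
    · have hodd' : Odd (cons hadj (r₁.append r₂)).length := by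
        simp only [length_cons, length_append, Nat.odd_iff, Nat.even_iff] at hw heven ⊢
        omega
      obtain ⟨y, d, hd, hdo, hdl⟩ := ih _ (by simp; omega) _ hodd' rfl
      exact ⟨y, d, hd, hdo, by simp at hdl; omega⟩
    · obtain ⟨y, d, hd, hdo, hdl⟩ := ih _ (by omega) c hodd rfl
      exact ⟨y, d, hd, hdo, by omega⟩

/-- The edges `p_{2t+1} p_{2t+2}`, `t < l`, of `p`: `EvenConnected G es u v` says that
`↑(p.middleEdges l) ≤ ↑es` for some `p` of length `2 * l + 1` with `1 ≤ l`. -/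
def Walk.middleEdges {u v : V} (p : G.Walk u v) (l : ℕ) : List (Sym2 V) :=
  List.ofFn fun t : Fin l => s(p.getVert (2 * ↑t + 1), p.getVert (2 * ↑t + 2))

@[simp]
lemma Walk.middleEdges_cons_cons {u a b v : V} (h : G.Adj u a) (h' : G.Adj a b)
    (p : G.Walk b v) (l : ℕ) :
    (cons h (cons h' p)).middleEdges (l + 1) = s(a, b) :: p.middleEdges l := by
  simp only [middleEdges, List.ofFn_succ, Fin.val_zero, Fin.val_succ]
  congr 1
  simp

variable {es : List (Sym2 V)}

/-- `AltWalk G es u v [(a₁, b₁), …, (aₗ, bₗ)]`: the walk `u a₁ b₁ … aₗ bₗ v` whose steps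
`aᵢ bᵢ` are edges in `es` and whose other steps are edges of `G`. -/
def AltWalk (G : SimpleGraph V) (es : List (Sym2 V)) : V → V → List (V × V) → Prop
  | u, v, [] => G.Adj u v
  | u, v, (a, b) :: L => G.Adj u a ∧ s(a, b) ∈ es ∧ AltWalk G es b v L

lemma altWalk_append_cons_iff (L₁ : List (V × V)) {u v a b : V} {L₂ : List (V × V)} :
    AltWalk G es u v (L₁ ++ (a, b) :: L₂) ↔
      AltWalk G es u a L₁ ∧ s(a, b) ∈ es ∧ AltWalk G es b v L₂ := by
  induction L₁ generalizing u with
  | nil => rfl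
  | cons z L ih =>
    simp only [List.cons_append, AltWalk, ih, and_assoc]

lemma AltWalk.mem {u v : V} {L : List (V × V)} (h : AltWalk G es u v L) {z : V × V}
    (hz : z ∈ L) : s(z.1, z.2) ∈ es := by
  induction L generalizing u with
  | nil => simp at hz
  | cons w L ih =>
    obtain ⟨h₁, h₂, h₃⟩ := h
    rcases List.mem_cons.mp hz with rfl | hz
    exacts [h₂, ih h₃ hz]

lemma AltWalk.reverse {u v : V} {L : List (V × V)} (h : AltWalk G es u v L) :
    AltWalk G es v u (L.reverse.map Prod.swap) := by
  induction L generalizing u with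
  | nil => exact h.symm
  | cons z L ih =>
    obtain ⟨a, b⟩ := z
    obtain ⟨h₁, h₂, h₃⟩ := h
    rw [List.reverse_cons, List.map_append, List.map_singleton, Prod.swap_prod_mk]
    exact (altWalk_append_cons_iff _).mpr ⟨ih h₃, Sym2.eq_swap ▸ h₂, h₁.symm⟩

/-- Two alternating walks ending in `x` and starting in `y` can be glued along a `G`-edge
between the last inner vertex `c` of the first and the first inner vertex `d` of the second. -/
lemma AltWalk.append {u x y w : V} {L₁ L₂ : List (V × V)} (h₁ : AltWalk G es u x L₁)
    (h₂ : AltWalk G es y w L₂) :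
    ∃ c d, G.Adj c x ∧ G.Adj y d ∧ (G.Adj c d → AltWalk G es u w (L₁ ++ L₂)) := by
  induction L₁ generalizing u with
  | nil =>
    cases L₂ with
    | nil => exact ⟨u, w, h₁, h₂, id⟩
    | cons z L₂ => exact ⟨u, z.1, h₁, h₂.1, fun h => ⟨h, h₂.2⟩⟩
  | cons z L₁ ih =>
    obtain ⟨c, d, hc, hd, hcd⟩ := ih h₁.2.2
    exact ⟨c, d, hc, hd, fun h => ⟨h₁.1, h₁.2.1, hcd h⟩⟩

lemma AltWalk.exists_walk (hes : ∀ e ∈ es, e ∈ G.edgeSet) {u v : V} {L : List (V × V)}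
    (h : AltWalk G es u v L) :
    ∃ p : G.Walk u v, p.length = 2 * L.length + 1 ∧
      p.middleEdges L.length = L.map fun z => s(z.1, z.2) := by
  induction L generalizing u with
  | nil => exact ⟨Walk.cons h Walk.nil, rfl, rfl⟩
  | cons z L ih =>
    obtain ⟨h₁, h₂, h₃⟩ := h
    obtain ⟨p, hp_len, hp_mid⟩ := ih h₃
    refine ⟨Walk.cons h₁ (Walk.cons (G.mem_edgeSet.mp (hes _ h₂)) p), ?_, by simp [hp_mid]⟩
    simp only [Walk.length_cons, hp_len, List.length_cons]
    ring

lemma Walk.exists_altWalk {u v : V} (l : ℕ) (p : G.Walk u v) (hp : p.length = 2 * l + 1)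
    (hmid : ∀ e ∈ p.middleEdges l, e ∈ es) : ∃ L, AltWalk G es u v L := by
  induction l generalizing u with
  | zero =>
    cases p with
    | nil => simp at hp
    | cons h q =>
      obtain rfl := q.eq_of_length_eq_zero (by simpa using hp)
      exact ⟨[], h⟩
  | succ l ih =>
    cases p with
    | nil => simp at hp
    | cons h₁ q =>
      cases q with
      | nil => simp at hp
      | cons h₂ q =>
        simp only [middleEdges_cons_cons, List.mem_cons, forall_eq_or_imp] at hmid
        obtain ⟨L, hL⟩ := ih q (by simp only [length_cons] at hp; omega) hmid.2
        exact ⟨(_, _) :: L, h₁, hmid.1, hL⟩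

lemma _root_.EvenConnected.exists_altWalk {u v : V} (h : EvenConnected G es u v) :
    ∃ L, AltWalk G es u v L := by
  obtain ⟨p, l, -, hp, hmid⟩ := h
  exact p.exists_altWalk l hp fun e he =>
    Multiset.mem_coe.mp (Multiset.mem_of_le hmid (Multiset.mem_coe.mpr he))

lemma exists_altWalk_of_adj_sup_fromRel {u v : V}
    (h : (G ⊔ fromRel (EvenConnected G es)).Adj u v) : ∃ L, AltWalk G es u v L := by
  rcases h with h | ⟨-, h | h⟩
  · exact ⟨[], h⟩
  · exact h.exists_altWalk
  · obtain ⟨L, hL⟩ := h.exists_altWalk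
    exact ⟨_, hL.reverse⟩

/-- Every alternating walk witnesses an edge of `G` or an even-connection: an edge of `es` used
twice in the same direction cuts out a loop, used in opposite directions it encloses a shorter
closed alternating walk; once no edge is overused, the walk has odd length at most
`2 * es.length + 1`, so by the odd-girth bound it cannot be closed. -/
lemma AltWalk.adj_sup_fromRel (hes : ∀ e ∈ es, e ∈ G.edgeSet)
    (hgirth : ∀ (u : V) (c : G.Walk u u), c.IsCycle → Odd c.length →
      2 * es.length + 1 < c.length)
    {u v : V} {L : List (V × V)} (h : AltWalk G es u v L) :
    (G ⊔ fromRel (EvenConnected G es)).Adj u v := by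
  induction hn : L.length using Nat.strong_induction_on generalizing u v L with
  | _ n ih =>
  by_cases hle : ((L.map fun z => s(z.1, z.2) : List (Sym2 V)) : Multiset (Sym2 V)) ≤ es
  · obtain ⟨p, hp_len, hp_mid⟩ := h.exists_walk hes
    have hL : L.length ≤ es.length := by simpa using Multiset.card_le_card hle
    have huv : u ≠ v := by
      rintro rfl
      obtain ⟨x, c, hc, hc_odd, hc_len⟩ :=
        p.exists_isCycle_odd_length_le_s17 (hp_len ▸ odd_two_mul_add_one _)
      have := hgirth x c hc hc_odd
      omega
    cases L with
    | nil => exact Or.inl h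
    | cons z L =>
      rw [← hp_mid] at hle
      exact Or.inr ⟨huv, Or.inl ⟨p, L.length + 1, by omega, hp_len, hle⟩⟩
  · have hnd : ¬ (L.map fun z => s(z.1, z.2)).Nodup := fun hnd =>
      hle <| (Multiset.le_iff_subset (Multiset.coe_nodup.mpr hnd)).mpr fun e he => by
        obtain ⟨z, hz, rfl⟩ := List.mem_map.mp (Multiset.mem_coe.mp he)
        exact Multiset.mem_coe.mpr (h.mem hz)
    obtain ⟨L₁, ⟨a, b⟩, L₂, ⟨a', b'⟩, L₃, rfl, hab⟩ :=
      List.exists_eq_append_cons_append_cons_of_not_nodup_map hnd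
    obtain ⟨h₁, hab_es, h'⟩ := (altWalk_append_cons_iff L₁).mp h
    obtain ⟨h₂, -, h₃⟩ := (altWalk_append_cons_iff L₂).mp h'
    simp only [List.length_append, List.length_cons] at hn
    rcases Sym2.eq_iff.mp hab with ⟨rfl, rfl⟩ | ⟨rfl, rfl⟩
    · exact ih _ (by simp; omega) ((altWalk_append_cons_iff L₁).mpr ⟨h₁, hab_es, h₃⟩) rfl
    · exact ((ih _ (by omega) h₂ rfl).ne rfl).elim

lemma MatchingClosesPaths.sup_fromRel {M : V → V} (hP : G.MatchingClosesPaths M)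
    (hes : ∀ e ∈ es, e ∈ G.edgeSet)
    (hgirth : ∀ (u : V) (c : G.Walk u u), c.IsCycle → Odd c.length →
      2 * es.length + 1 < c.length) :
    (G ⊔ fromRel (EvenConnected G es)).MatchingClosesPaths M := by
  intro x a b hax hbx
  obtain ⟨L₁, h₁⟩ := exists_altWalk_of_adj_sup_fromRel hax
  obtain ⟨L₂, h₂⟩ := exists_altWalk_of_adj_sup_fromRel hbx.symm
  obtain ⟨c, d, hcx, hxd, hglue⟩ := h₁.append h₂
  exact (hglue (hP x c d hcx hxd.symm)).adj_sup_fromRel hes hgirth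

end SimpleGraph

open SimpleGraph in
theorem evenConnection_graph_very_well_covered_general {V : Type*} [Fintype V] (G : SimpleGraph V)
    (hiso : ∀ v : V, ∃ w, G.Adj v w) (heven : Even (Fintype.card V))
    (hvwc : VeryWellCovered G)
    (k : ℕ)
    (hgirth : ∀ (u : V) (c : G.Walk u u), c.IsCycle → Odd c.length → 2 * k + 1 ≤ c.length)
    (es : List (Sym2 V)) (hes : ∀ e ∈ es, e ∈ G.edgeSet)
    (hsk : es.length ≤ k - 2)
    (G' : SimpleGraph V)
    (hG' : G' = G ⊔ SimpleGraph.fromRel (fun u v => EvenConnected G es u v)) :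
    VeryWellCovered G' := by
  obtain ⟨M, hM, hGM⟩ := IsWellCovered.exists_involutive_adj hvwc hiso
    (Nat.two_mul_div_two_of_even heven).ge
  have hgirth' : ∀ (u : V) (c : G.Walk u u), c.IsCycle → Odd c.length →
      2 * es.length + 1 < c.length := fun u c hc hodd => by
    -- for `k ≤ 1` the truncated `k - 2` forces `es = []`, and cycles have length at least 3
    have := hgirth u c hc hodd
    have := hc.three_le_length
    omega
  subst hG'
  exact veryWellCovered_of_matchingClosesPaths hM (fun v => Or.inl (hGM v))
    ((hvwc.matchingClosesPaths heven hM hGM).sup_fromRel hes hgirth')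

/-- Let `G` be a very well-covered graph (no isolated vertices, evenly many vertices)
with odd-girth at least `2k+1`, `k ≥ 3`, and let `e₁, …, e_s` be edges of `G` with
`1 ≤ s ≤ k-2`.  Let `G'` be the graph on `V(G)` whose edges are those of `G` together
with all pairs `{u,v}` of distinct vertices that are even-connected with respect to
`e₁ ⋯ e_s`.  Then `G'` is very well-covered. -/
theorem evenConnection_graph_very_well_covered {V : Type*} [Fintype V] (G : SimpleGraph V)
    (hiso : ∀ v : V, ∃ w, G.Adj v w) (heven : Even (Fintype.card V))
    (hvwc : VeryWellCovered G)
    (k : ℕ) (hk : 3 ≤ k)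
    (hgirth : ∀ (u : V) (c : G.Walk u u), c.IsCycle → Odd c.length → 2 * k + 1 ≤ c.length)
    (es : List (Sym2 V)) (hes : ∀ e ∈ es, e ∈ G.edgeSet)
    (hs1 : 1 ≤ es.length) (hsk : es.length ≤ k - 2)
    (G' : SimpleGraph V)
    (hG' : G' = G ⊔ SimpleGraph.fromRel (fun u v => EvenConnected G es u v)) :
    VeryWellCovered G' :=
  evenConnection_graph_very_well_covered_general G hiso heven hvwc k hgirth es hes hsk G' hG'
end
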